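/- arXiv:2009.07137 — 14 statements merged into one kernel-verified Lean document; each statement's English description precedes it below -/
import Mathlib

section
/- Let ρ_1, ..., ρ_{n-1} be real numbers with |ρ_i| < 1 for all i, and define the symmetric n×n matrix R by R_{kl} = ρ_k ρ_{k+1} ⋯ ρ_{l-1} for k ≤ l (so R_{kk} = 1). Then R is invertible and its inverse G is tridiagonal with G_{11} = 1/(1-ρ_1²), G_{nn} = 1/(1-ρ_{n-1}²), G_{ii} = (1-ρ_{i-1}²ρ_i²)/((1-ρ_{i-1}²)(1-ρ_i²)) for 2 ≤ i ≤ n-1, and G_{i,i+1} = G_{i+1,i} = -ρ_i/(1-ρ_i²). -/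
/-!
The entries of `R` have the Markov property `R k (i+1) = R k i * ρ i` for `k ≤ i` and
`R k i = ρ i * R k (i+1)` for `i < k`. The candidate inverse `G` is `1` plus, for every edge
`i ~ i+1`, the block `(1 - ρᵢ²)⁻¹ [[ρᵢ², -ρᵢ], [-ρᵢ, ρᵢ²]]` on rows and columns `i, i+1`. By the
Markov property, multiplying `R` by this block gives `-R k (i+1)` in column `i+1` for rows `k ≤ i`,
`-R k i` in column `i` for rows `k > i`, and zero elsewhere. Hence entry `(k, l)` of `R * G` is
`R k l` minus `R k l` once if `k ≠ l`, which is `δ k l`.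
-/

open Finset

section Corr

variable {M : Type*} [CommMonoid M]

def markovCorr (ρ : ℕ → M) (k l : ℕ) : M :=
  ∏ j ∈ Ico (min k l) (max k l), ρ j

theorem markovCorr_self (ρ : ℕ → M) (k : ℕ) : markovCorr ρ k k = 1 := by
  simp [markovCorr]

theorem markovCorr_succ_of_le (ρ : ℕ → M) {k i : ℕ} (h : k ≤ i) :
    markovCorr ρ k (i + 1) = markovCorr ρ k i * ρ i := by
  rw [markovCorr, markovCorr, min_eq_left h, max_eq_right h, min_eq_left (by omega),
    max_eq_right (by omega), prod_Ico_succ_top h]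

theorem markovCorr_of_lt (ρ : ℕ → M) {k i : ℕ} (h : i < k) :
    markovCorr ρ k i = ρ i * markovCorr ρ k (i + 1) := by
  rw [markovCorr, markovCorr, min_eq_right h.le, max_eq_left h.le, min_eq_right (by omega),
    max_eq_left (by omega), prod_eq_prod_Ico_succ_bot h]

end Corr

theorem sum_range_mul_of_tridiagonal {R : Type*} [NonUnitalNonAssocSemiring R] {n l : ℕ}
    (hl : l < n) (f : ℕ → R) (G : ℕ → ℕ → R)
    (hG : ∀ j, j ≠ l → j + 1 ≠ l → j ≠ l + 1 → G j l = 0) :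
    ∑ j ∈ range n, f j * G j l = f l * G l l + (if 0 < l then f (l - 1) * G (l - 1) l else 0)
      + (if l + 1 < n then f (l + 1) * G (l + 1) l else 0) := by
  have reduce (s : Finset ℕ) (hs : s ⊆ range n)
      (hband : ∀ j < n, j + 1 = l ∨ j = l ∨ j = l + 1 → j ∈ s) :
      ∑ j ∈ range n, f j * G j l = ∑ j ∈ s, f j * G j l := by
    refine (sum_subset hs fun j hj hjs => ?_).symm
    rw [mem_range] at hj
    rw [hG j (by grind) (by grind) (by grind), mul_zero]
  by_cases hln : l + 1 < n <;> rcases Nat.eq_zero_or_pos l with rfl | hl0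
  · rw [reduce {0, 1} (by grind) (by grind), sum_pair zero_ne_one]
    simp [hln]
  · rw [reduce {l - 1, l, l + 1} (by grind) (by grind), sum_insert (by grind), sum_pair (by grind)]
    simp only [hl0, hln, if_true]
    abel
  · rw [reduce {0} (by grind) (by grind), sum_singleton]
    simp [hln]
  · rw [reduce {l - 1, l} (by grind) (by grind), sum_pair (by grind)]
    simp only [hl0, hln, if_true, if_false]
    abel

section Precision

variable {K : Type*} [Field K]

def markovPrecision (n : ℕ) (ρ : ℕ → K) (i j : ℕ) : K :=
  if i = j then
    1 + (if 0 < i then ρ (i - 1) ^ 2 / (1 - ρ (i - 1) ^ 2) else 0)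
      + (if i + 1 < n then ρ i ^ 2 / (1 - ρ i ^ 2) else 0)
  else if j = i + 1 then -ρ i / (1 - ρ i ^ 2)
  else if i = j + 1 then -ρ j / (1 - ρ j ^ 2)
  else 0

variable (n : ℕ) (ρ : ℕ → K)

theorem markovPrecision_self (i : ℕ) :
    markovPrecision n ρ i i = 1 + (if 0 < i then ρ (i - 1) ^ 2 / (1 - ρ (i - 1) ^ 2) else 0)
      + (if i + 1 < n then ρ i ^ 2 / (1 - ρ i ^ 2) else 0) :=
  if_pos rfl

theorem markovPrecision_succ_right (i : ℕ) :
    markovPrecision n ρ i (i + 1) = -ρ i / (1 - ρ i ^ 2) := by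
  rw [markovPrecision, if_neg (by omega), if_pos rfl]

theorem markovPrecision_succ_left (i : ℕ) :
    markovPrecision n ρ (i + 1) i = -ρ i / (1 - ρ i ^ 2) := by
  rw [markovPrecision, if_neg (by omega), if_neg (by omega), if_pos rfl]

theorem markovPrecision_eq_zero {i j : ℕ} (h : i + 2 ≤ j ∨ j + 2 ≤ i) :
    markovPrecision n ρ i j = 0 := by
  rw [markovPrecision, if_neg (by omega), if_neg (by omega), if_neg (by omega)]

variable {ρ}

theorem markovCorr_mul_add_markovCorr_succ_mul {i : ℕ} (hi : 1 - ρ i ^ 2 ≠ 0) (k : ℕ) :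
    markovCorr ρ k i * (-ρ i / (1 - ρ i ^ 2)) + ρ i ^ 2 / (1 - ρ i ^ 2) * markovCorr ρ k (i + 1)
      = if k ≤ i then -markovCorr ρ k (i + 1) else 0 := by
  split_ifs with hk
  · rw [markovCorr_succ_of_le ρ hk]
    field_simp
    ring
  · rw [markovCorr_of_lt ρ (by omega : i < k)]
    field_simp
    ring

theorem markovCorr_succ_mul_add_markovCorr_mul {i : ℕ} (hi : 1 - ρ i ^ 2 ≠ 0) (k : ℕ) :
    markovCorr ρ k (i + 1) * (-ρ i / (1 - ρ i ^ 2)) + ρ i ^ 2 / (1 - ρ i ^ 2) * markovCorr ρ k i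
      = if i < k then -markovCorr ρ k i else 0 := by
  split_ifs with hk
  · rw [markovCorr_of_lt ρ hk]
    field_simp
    ring
  · rw [markovCorr_succ_of_le ρ (not_lt.1 hk)]
    field_simp
    ring

theorem sum_markovCorr_mul_markovPrecision (hρ : ∀ i, i + 1 < n → 1 - ρ i ^ 2 ≠ 0)
    {k l : ℕ} (hk : k < n) (hl : l < n) :
    ∑ j ∈ range n, markovCorr ρ k j * markovPrecision n ρ j l = if k = l then 1 else 0 := by
  rw [sum_range_mul_of_tridiagonal hl _ _ fun j _ _ _ => markovPrecision_eq_zero n ρ (by omega),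
    markovPrecision_self]
  have lower (hl0 : 0 < l) : markovCorr ρ k (l - 1) * markovPrecision n ρ (l - 1) l
      + ρ (l - 1) ^ 2 / (1 - ρ (l - 1) ^ 2) * markovCorr ρ k l
      = if k < l then -markovCorr ρ k l else 0 := by
    obtain ⟨m, rfl⟩ : ∃ m, l = m + 1 := ⟨l - 1, by omega⟩
    simpa [markovPrecision_succ_right, Nat.lt_succ_iff] using
      markovCorr_mul_add_markovCorr_succ_mul (hρ m (by omega)) k
  have upper (hln : l + 1 < n) : markovCorr ρ k (l + 1) * markovPrecision n ρ (l + 1) l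
      + ρ l ^ 2 / (1 - ρ l ^ 2) * markovCorr ρ k l
      = if l < k then -markovCorr ρ k l else 0 := by
    simpa [markovPrecision_succ_left] using
      markovCorr_succ_mul_add_markovCorr_mul (hρ l hln) k
  trans markovCorr ρ k l + (if 0 < l ∧ k < l then -markovCorr ρ k l else 0)
    + (if l + 1 < n ∧ l < k then -markovCorr ρ k l else 0)
  · by_cases h1 : 0 < l <;> by_cases h2 : l + 1 < n <;>
      simp only [h1, h2, true_and, false_and, if_true, if_false]
    · linear_combination lower h1 + upper h2
    · linear_combination lower h1
    · linear_combination upper h2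
    · ring
  · split_ifs <;> simp_all [markovCorr_self] <;> omega

theorem markovPrecision_zero_zero (hn : 1 < n) (h0 : 1 - ρ 0 ^ 2 ≠ 0) :
    markovPrecision n ρ 0 0 = 1 / (1 - ρ 0 ^ 2) := by
  rw [markovPrecision_self, if_neg (lt_irrefl 0), if_pos hn]
  field_simp
  ring

theorem markovPrecision_last (hn : 1 < n) (h : 1 - ρ (n - 2) ^ 2 ≠ 0) :
    markovPrecision n ρ (n - 1) (n - 1) = 1 / (1 - ρ (n - 2) ^ 2) := by
  rw [markovPrecision_self, if_pos (by omega), if_neg (by omega), show n - 1 - 1 = n - 2 by omega]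
  field_simp
  ring

theorem markovPrecision_self_of_pos_of_lt {i : ℕ} (hi : 0 < i) (hin : i + 1 < n)
    (h₁ : 1 - ρ (i - 1) ^ 2 ≠ 0) (h₂ : 1 - ρ i ^ 2 ≠ 0) :
    markovPrecision n ρ i i
      = (1 - ρ (i - 1) ^ 2 * ρ i ^ 2) / ((1 - ρ (i - 1) ^ 2) * (1 - ρ i ^ 2)) := by
  rw [markovPrecision_self, if_pos hi, if_pos hin]
  field_simp
  ring

theorem markovCorr_mul_markovPrecision (hρ : ∀ i, i + 1 < n → 1 - ρ i ^ 2 ≠ 0) :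
    (Matrix.of fun k l : Fin n => markovCorr ρ k l) *
      Matrix.of (fun i j : Fin n => markovPrecision n ρ i j) = 1 := by
  ext k l
  simp only [Matrix.mul_apply, Matrix.of_apply, Matrix.one_apply]
  rw [Fin.sum_univ_eq_sum_range (fun j => markovCorr ρ k j * markovPrecision n ρ j l),
    sum_markovCorr_mul_markovPrecision n hρ k.isLt l.isLt]
  simp [Fin.ext_iff]

end Precision

/-- The inverse of the Markov correlation matrix `R` (with `R k l = ρ_k ⋯ ρ_{l-1}` for `k ≤ l`)
is tridiagonal, with explicit entries. Indices are 0-based: `ρ i` is the correlation of the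
variables with (0-based) indices `i` and `i+1`. -/
theorem stmt1 (n : ℕ) (hn : 2 ≤ n) (ρ : ℕ → ℝ) (hρ : ∀ i, i + 1 < n → |ρ i| < 1)
    (R : Matrix (Fin n) (Fin n) ℝ)
    (hR : ∀ k l : Fin n, R k l = ∏ j ∈ Finset.Ico (min (k : ℕ) (l : ℕ)) (max (k : ℕ) (l : ℕ)), ρ j) :
    IsUnit R.det ∧
    (∀ i j : Fin n, (i : ℕ) + 2 ≤ (j : ℕ) ∨ (j : ℕ) + 2 ≤ (i : ℕ) → R⁻¹ i j = 0) ∧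
    R⁻¹ ⟨0, by omega⟩ ⟨0, by omega⟩ = 1 / (1 - ρ 0 ^ 2) ∧
    R⁻¹ ⟨n - 1, by omega⟩ ⟨n - 1, by omega⟩ = 1 / (1 - ρ (n - 2) ^ 2) ∧
    (∀ i : Fin n, 1 ≤ (i : ℕ) → (i : ℕ) ≤ n - 2 →
      R⁻¹ i i = (1 - ρ ((i : ℕ) - 1) ^ 2 * ρ (i : ℕ) ^ 2) /
        ((1 - ρ ((i : ℕ) - 1) ^ 2) * (1 - ρ (i : ℕ) ^ 2))) ∧
    (∀ i j : Fin n, (j : ℕ) = (i : ℕ) + 1 →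
      R⁻¹ i j = -ρ (i : ℕ) / (1 - ρ (i : ℕ) ^ 2) ∧
      R⁻¹ j i = -ρ (i : ℕ) / (1 - ρ (i : ℕ) ^ 2)) := by
  have hρ' : ∀ i, i + 1 < n → 1 - ρ i ^ 2 ≠ 0 := fun i hi =>
    (sub_pos.2 ((sq_lt_one_iff_abs_lt_one _).2 (hρ i hi))).ne'
  have hRG : R * Matrix.of (fun i j : Fin n => markovPrecision n ρ i j) = 1 := by
    rw [← markovCorr_mul_markovPrecision n hρ']
    congr 1
    exact Matrix.ext hR
  have hinv : R⁻¹ = Matrix.of fun i j : Fin n => markovPrecision n ρ i j :=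
    Matrix.inv_eq_right_inv hRG
  simp only [hinv, Matrix.of_apply]
  refine ⟨Matrix.isUnit_det_of_right_inverse hRG,
    fun i j hij => markovPrecision_eq_zero n ρ hij,
    markovPrecision_zero_zero n hn (hρ' 0 (by omega)),
    markovPrecision_last n hn (hρ' (n - 2) (by omega)),
    fun i h₁ h₂ => markovPrecision_self_of_pos_of_lt n h₁ (by omega)
      (hρ' _ (by omega)) (hρ' _ (by omega)),
    fun i j hj => ?_⟩
  rw [hj]
  exact ⟨markovPrecision_succ_right n ρ i, markovPrecision_succ_left n ρ i⟩
end

section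
/- Let ρ_1, ..., ρ_{n-1} be reals with |ρ_i| < 1 and let R be the n×n matrix with R_{kl} = ρ_k ρ_{k+1} ⋯ ρ_{l-1} for k ≤ l and R_{kk}=1. Then det R = ∏_{i=1}^{n-1} (1 - ρ_i²). In particular R is positive definite. -/
/-!
The correlation matrix factors as `R = L D Lᵀ`, where `L` is lower unitriangular with
`L k m = ρ_m ⋯ ρ_{k-1}` for `m ≤ k` and `D = diag(1, 1 - ρ_0², 1 - ρ_1², …)`. This is the
innovation decomposition of the Markov chain `X_{k+1} = ρ_k X_k + ε_{k+1}` with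
`Var ε_{k+1} = 1 - ρ_k²`: the entry identity reduces to `∑_{m ≤ k} D m (ρ_m ⋯ ρ_{k-1})² = 1`,
which telescopes. Hence `det R = det D`, and `R` is positive definite because `D` is and `L`
is invertible.
-/

open Finset Matrix

section MarkovCorrelation

variable {α : Type*} [CommRing α]

def markovCorrelation (n : ℕ) (ρ : ℕ → α) : Matrix (Fin n) (Fin n) α :=
  of fun k l => ∏ j ∈ Ico (min (k : ℕ) l) (max (k : ℕ) l), ρ j

def markovFactor (n : ℕ) (ρ : ℕ → α) : Matrix (Fin n) (Fin n) α :=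
  of fun k m => if (m : ℕ) ≤ k then ∏ i ∈ Ico (m : ℕ) k, ρ i else 0

def innovationVariance (ρ : ℕ → α) : ℕ → α
  | 0 => 1
  | j + 1 => 1 - ρ j ^ 2

theorem sum_innovationVariance_mul_prod_sq (ρ : ℕ → α) (k : ℕ) :
    ∑ m ∈ range (k + 1), innovationVariance ρ m * (∏ i ∈ Ico m k, ρ i) ^ 2 = 1 := by
  induction k with
  | zero => simp [innovationVariance]
  | succ k ih =>
    have hstep : ∀ m ∈ range (k + 1), innovationVariance ρ m * (∏ i ∈ Ico m (k + 1), ρ i) ^ 2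
        = ρ k ^ 2 * (innovationVariance ρ m * (∏ i ∈ Ico m k, ρ i) ^ 2) := by
      intro m hm
      rw [prod_Ico_succ_top (by simpa [Nat.lt_succ_iff] using hm)]
      ring
    rw [sum_range_succ, sum_congr rfl hstep, ← mul_sum, ih]
    simp [innovationVariance]

theorem markovFactor_isLowerTriangular (n : ℕ) (ρ : ℕ → α) :
    (markovFactor n ρ).IsLowerTriangular := fun k m hkm => by
  have hkm : (k : ℕ) < m := hkm
  simp only [markovFactor, of_apply, if_neg (not_le.mpr hkm)]

theorem det_markovFactor (n : ℕ) (ρ : ℕ → α) : (markovFactor n ρ).det = 1 := by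
  rw [det_of_isLowerTriangular _ (markovFactor_isLowerTriangular n ρ)]
  exact prod_eq_one fun m _ => by simp [markovFactor]

theorem markovFactor_mul_diagonal_mul_transpose_apply_of_le {n : ℕ} (ρ : ℕ → α)
    {k l : Fin n} (hkl : k ≤ l) :
    (markovFactor n ρ * diagonal (fun m : Fin n => innovationVariance ρ m) * (markovFactor n ρ)ᵀ) k l
      = ∏ i ∈ Ico (k : ℕ) l, ρ i := by
  set f : ℕ → α := fun m => innovationVariance ρ m * (∏ i ∈ Ico m k, ρ i) ^ 2
  have hterm : ∀ m : Fin n,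
      markovFactor n ρ k m * innovationVariance ρ m * markovFactor n ρ l m
        = (if (m : ℕ) ≤ k then f m else 0) * ∏ i ∈ Ico (k : ℕ) l, ρ i := by
    intro m
    by_cases hmk : (m : ℕ) ≤ k
    · have hml : (m : ℕ) ≤ l := hmk.trans hkl
      simp only [f, markovFactor, of_apply, if_pos hmk, if_pos hml,
        ← prod_Ico_consecutive _ hmk (show (k : ℕ) ≤ l from hkl)]
      ring
    · simp only [markovFactor, of_apply, if_neg hmk, zero_mul]
  have hrange : (range n).filter (· ≤ (k : ℕ)) = range (k + 1) := by
    ext m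
    simp only [mem_filter, mem_range]
    omega
  rw [mul_apply]
  simp only [mul_diagonal, transpose_apply, hterm]
  rw [← sum_mul, Fin.sum_univ_eq_sum_range (fun m => if m ≤ (k : ℕ) then f m else 0),
    ← sum_filter, hrange, sum_innovationVariance_mul_prod_sq, one_mul]

theorem markovFactor_mul_diagonal_mul_transpose (n : ℕ) (ρ : ℕ → α) :
    markovFactor n ρ * diagonal (fun m : Fin n => innovationVariance ρ m) * (markovFactor n ρ)ᵀ
      = markovCorrelation n ρ := by
  set L := markovFactor n ρ
  have hsymm : (L * diagonal (fun m : Fin n => innovationVariance ρ m) * Lᵀ).IsSymm := by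
    rw [Matrix.IsSymm, transpose_mul, transpose_mul, transpose_transpose, diagonal_transpose, mul_assoc]
  ext k l
  rcases le_total k l with hkl | hlk
  · rw [markovFactor_mul_diagonal_mul_transpose_apply_of_le ρ hkl, markovCorrelation, of_apply,
      min_eq_left (a := (k : ℕ)) hkl, max_eq_right (a := (k : ℕ)) hkl]
  · rw [← hsymm.apply, markovFactor_mul_diagonal_mul_transpose_apply_of_le ρ hlk,
      markovCorrelation, of_apply, min_eq_right (a := (k : ℕ)) hlk, max_eq_left (a := (k : ℕ)) hlk]

theorem det_markovCorrelation (n : ℕ) (ρ : ℕ → α) :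
    (markovCorrelation n ρ).det = ∏ i ∈ range (n - 1), (1 - ρ i ^ 2) := by
  rw [← markovFactor_mul_diagonal_mul_transpose, det_mul, det_mul, det_transpose,
    det_markovFactor, one_mul, mul_one, det_diagonal,
    Fin.prod_univ_eq_prod_range (innovationVariance ρ)]
  cases n with
  | zero => simp
  | succ n => simp [prod_range_succ', innovationVariance]

end MarkovCorrelation

theorem innovationVariance_pos {ρ : ℕ → ℝ} {m : ℕ} (hρ : ∀ j, j < m → |ρ j| < 1) :
    0 < innovationVariance ρ m := by
  cases m with
  | zero => exact one_pos
  | succ j =>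
    have hj : ρ j ^ 2 < 1 := by simpa [sq_lt_one_iff_abs_lt_one] using hρ j (Nat.lt_succ_self j)
    simpa [innovationVariance] using hj

theorem posDef_markovCorrelation {n : ℕ} {ρ : ℕ → ℝ} (hρ : ∀ i, i + 1 < n → |ρ i| < 1) :
    (markovCorrelation n ρ).PosDef := by
  rw [← markovFactor_mul_diagonal_mul_transpose, ← conjTranspose_eq_transpose_of_trivial]
  refine PosDef.mul_mul_conjTranspose_same (posDef_diagonal_iff.mpr fun m => ?_)
    (vecMul_injective_of_isUnit ?_)
  · exact innovationVariance_pos fun j hj => hρ j (by omega)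
  · rw [isUnit_iff_isUnit_det, det_markovFactor]
    exact isUnit_one

/-- The determinant of the Markov correlation matrix `R` (with `R k l = ρ_k ⋯ ρ_{l-1}` for
`k ≤ l`) equals `∏ (1 - ρ_i²)`; in particular `R` is positive definite. -/
theorem stmt2 (n : ℕ) (ρ : ℕ → ℝ) (hρ : ∀ i, i + 1 < n → |ρ i| < 1)
    (R : Matrix (Fin n) (Fin n) ℝ)
    (hR : ∀ k l : Fin n, R k l = ∏ j ∈ Finset.Ico (min (k : ℕ) (l : ℕ)) (max (k : ℕ) (l : ℕ)), ρ j) :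
    R.det = ∏ i ∈ Finset.range (n - 1), (1 - ρ i ^ 2) ∧ R.PosDef := by
  obtain rfl : R = markovCorrelation n ρ := Matrix.ext hR
  exact ⟨det_markovCorrelation n ρ, posDef_markovCorrelation hρ⟩
end

section
/- Let C be a symmetric positive definite n×n real matrix with C_{ii} = 1 for all i. Then det C ≤ ∏_{i=1}^{n-1} (1 - C_{i,i+1}²), with equality if and only if C_{kl} = ∏_{j=k}^{l-1} C_{j,j+1} for all k < l. -/
/-!
Induct on `n` through the Schur complement of the leading block `A` of `C`: with `b` the last
column of `C` above the diagonal, `det C = det A * (1 - bᵀ A⁻¹ b)`. Because `A⁻¹` sends the last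
column `a` of `A` to a unit vector and that column has last entry `1`, the quantity
`bᵀ A⁻¹ b - b_last²` is the `A⁻¹`-norm of `b - b_last • a`. Hence `det C ≤ det A * (1 - b_last²)`,
with equality iff `b = b_last • a`: for the new column `n` this is the Markov recursion
`C i n = C (n-1) n * C i (n-1)`.
-/

open Finset

theorem eq_mul_iff_of_le_mul_of_le {α : Type*} [Semiring α] [LinearOrder α]
    [IsStrictOrderedRing α] {a b p q : α} (hab : a ≤ b * q) (hbp : b ≤ p) (hq : 0 < q) :
    a = p * q ↔ a = b * q ∧ b = p := by
  refine ⟨fun h => ?_, fun ⟨h, hbp⟩ => hbp ▸ h⟩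
  have hb : b = p := hbp.antisymm (le_of_mul_le_mul_right (h ▸ hab) hq)
  exact ⟨hb ▸ h, hb⟩

namespace Matrix

section Field

variable {ι K : Type*} [Fintype ι] [Field K]

theorem IsSymm.dotProduct_mulVec_comm {A : Matrix ι ι K} (hA : A.IsSymm) (v w : ι → K) :
    v ⬝ᵥ (A *ᵥ w) = w ⬝ᵥ (A *ᵥ v) := by
  rw [dotProduct_mulVec, ← mulVec_transpose, hA.eq, dotProduct_comm]

variable [DecidableEq ι]

theorem IsSymm.dotProduct_inv_mulVec_sub_smul_col {A : Matrix ι ι K} (hA : A.IsSymm)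
    (hdet : IsUnit A.det) {e : ι} (he : A e e = 1) (b : ι → K) :
    (b - b e • A.col e) ⬝ᵥ (A⁻¹ *ᵥ (b - b e • A.col e)) = b ⬝ᵥ (A⁻¹ *ᵥ b) - b e ^ 2 := by
  have hcol : A⁻¹ *ᵥ A.col e = Pi.single e 1 := by
    rw [← mulVec_single_one, mulVec_mulVec, nonsing_inv_mul _ hdet, one_mulVec]
  simp only [mulVec_sub, mulVec_smul, hcol, sub_dotProduct, dotProduct_sub, smul_dotProduct,
    dotProduct_smul]
  rw [hA.inv.dotProduct_mulVec_comm (A.col e), hcol]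
  simp only [dotProduct_single, col_apply, he, smul_eq_mul]
  ring

theorem det_eq_det_submatrix_castSucc_mul {k : ℕ} (C : Matrix (Fin (k + 1)) (Fin (k + 1)) K)
    (hA : IsUnit (C.submatrix Fin.castSucc Fin.castSucc).det) :
    C.det = (C.submatrix Fin.castSucc Fin.castSucc).det *
      (C (Fin.last k) (Fin.last k) - (fun j => C (Fin.last k) j.castSucc) ⬝ᵥ
        ((C.submatrix Fin.castSucc Fin.castSucc)⁻¹ *ᵥ fun i => C i.castSucc (Fin.last k))) := by
  have hM₁₁ : (C.submatrix finSumFinEquiv finSumFinEquiv).toBlocks₁₁ =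
      C.submatrix Fin.castSucc Fin.castSucc := rfl
  have := invertibleOfIsUnitDet _ (hM₁₁ ▸ hA)
  rw [← det_submatrix_equiv_self finSumFinEquiv, ← fromBlocks_toBlocks (C.submatrix _ _),
    det_fromBlocks₁₁, invOf_eq_nonsing_inv, hM₁₁, det_unique (_ - _)]
  congr 1
  simp only [sub_apply, mul_apply, dotProduct, mulVec, Finset.sum_mul, Finset.mul_sum, mul_assoc]
  exact congrArg₂ _ rfl Finset.sum_comm

end Field

namespace PosDef

variable {ι : Type*} [Fintype ι] [DecidableEq ι] {A : Matrix ι ι ℝ}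

theorem sq_le_dotProduct_inv_mulVec (hA : A.PosDef) {e : ι} (he : A e e = 1) (b : ι → ℝ) :
    b e ^ 2 ≤ b ⬝ᵥ (A⁻¹ *ᵥ b) := by
  have h := (isHermitian_iff_isSymm.mp hA.1).dotProduct_inv_mulVec_sub_smul_col
    hA.det_pos.ne'.isUnit he b
  have := hA.inv.posSemidef.dotProduct_mulVec_nonneg (b - b e • A.col e)
  simp only [star_trivial] at this
  linarith

theorem dotProduct_inv_mulVec_eq_sq_iff (hA : A.PosDef) {e : ι} (he : A e e = 1) (b : ι → ℝ) :
    b ⬝ᵥ (A⁻¹ *ᵥ b) = b e ^ 2 ↔ b = b e • A.col e := by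
  have h := (isHermitian_iff_isSymm.mp hA.1).dotProduct_inv_mulVec_sub_smul_col
    hA.det_pos.ne'.isUnit he b
  rw [← sub_eq_zero, ← h, ← sub_eq_zero (a := b)]
  constructor
  · intro h0
    by_contra hne
    simpa [h0] using hA.inv.dotProduct_mulVec_pos hne
  · intro h0
    simp [h0]

theorem det_le_det_submatrix_castSucc_mul {k : ℕ} {C : Matrix (Fin (k + 1)) (Fin (k + 1)) ℝ}
    (hC : C.PosDef) {e : Fin k} (he : C e.castSucc e.castSucc = 1) :
    C.det ≤ (C.submatrix Fin.castSucc Fin.castSucc).det *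
        (C (Fin.last k) (Fin.last k) - C e.castSucc (Fin.last k) ^ 2) ∧
      (C.det = (C.submatrix Fin.castSucc Fin.castSucc).det *
          (C (Fin.last k) (Fin.last k) - C e.castSucc (Fin.last k) ^ 2) ↔
        ∀ i : Fin k,
          C i.castSucc (Fin.last k) = C e.castSucc (Fin.last k) * C i.castSucc e.castSucc) := by
  set A := C.submatrix Fin.castSucc Fin.castSucc
  have hA : A.PosDef := hC.submatrix (Fin.castSucc_injective k)
  set b : Fin k → ℝ := fun i => C i.castSucc (Fin.last k)
  have hrow : (fun j => C (Fin.last k) j.castSucc) = b :=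
    funext fun j => (isHermitian_iff_isSymm.mp hC.1).apply _ _
  have hA_det := hA.det_pos
  rw [C.det_eq_det_submatrix_castSucc_mul hA_det.ne'.isUnit, hrow]
  refine ⟨mul_le_mul_of_nonneg_left
    (by linarith [hA.sq_le_dotProduct_inv_mulVec he b]) hA_det.le, ?_⟩
  rw [mul_right_inj' hA_det.ne', sub_right_inj, hA.dotProduct_inv_mulVec_eq_sq_iff he b,
    funext_iff]
  rfl

end PosDef

end Matrix

def IsMarkov (c : ℕ → ℕ → ℝ) (n : ℕ) : Prop :=
  ∀ k l, k < l → l < n → c k l = ∏ j ∈ Ico k l, c j (j + 1)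

theorem isMarkov_iff_forall_fin {c : ℕ → ℕ → ℝ} {n : ℕ} :
    IsMarkov c n ↔ ∀ k l : Fin n, (k : ℕ) < l → c k l = ∏ j ∈ Ico (k : ℕ) l, c j (j + 1) :=
  ⟨fun h k l hkl => h k l hkl l.2, fun h k l hkl hl => h ⟨k, hkl.trans hl⟩ ⟨l, hl⟩ hkl⟩

theorem IsMarkov.eq_prod_of_le {c : ℕ → ℕ → ℝ} {k m : ℕ} (h : IsMarkov c (m + 1))
    (hm : c m m = 1) (hk : k ≤ m) : c k m = ∏ j ∈ Ico k m, c j (j + 1) := by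
  rcases hk.lt_or_eq with hk | rfl
  · exact h k m hk m.lt_succ_self
  · simp [hm]

theorem isMarkov_succ_succ_iff {c : ℕ → ℕ → ℝ} {m : ℕ} (hm : c m m = 1) :
    IsMarkov c (m + 2) ↔
      IsMarkov c (m + 1) ∧ ∀ i < m + 1, c i (m + 1) = c m (m + 1) * c i m := by
  constructor
  · intro h
    have h' : IsMarkov c (m + 1) := fun k l hkl hl => h k l hkl (by omega)
    refine ⟨h', fun i hi => ?_⟩
    rw [h i (m + 1) hi (by omega), prod_Ico_succ_top (by omega), h'.eq_prod_of_le hm (by omega),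
      mul_comm]
  · rintro ⟨h, hstep⟩ k l hkl hl
    rcases (Nat.lt_succ_iff.mp hl).lt_or_eq with hl | rfl
    · exact h k l hkl hl
    · rw [hstep k hkl, h.eq_prod_of_le hm (by omega), prod_Ico_succ_top (by omega), mul_comm]

theorem det_le_prod_and_eq_iff_isMarkov (c : ℕ → ℕ → ℝ) :
    ∀ (n : ℕ) (C : Matrix (Fin n) (Fin n) ℝ), (∀ i j : Fin n, C i j = c i j) → C.PosDef →
      (∀ i, C i i = 1) →
      C.det ≤ ∏ i ∈ range (n - 1), (1 - c i (i + 1) ^ 2) ∧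
        (C.det = ∏ i ∈ range (n - 1), (1 - c i (i + 1) ^ 2) ↔ IsMarkov c n)
  | 0, C, _, _, _ => by simp [IsMarkov]
  | 1, C, _, _, hdiag => by
    have h : IsMarkov c 1 := fun k l hkl hl => by omega
    simp [Matrix.det_unique, hdiag, h]
  | m + 2, C, hc, hC, hdiag => by
    have hA := hC.submatrix (Fin.castSucc_injective _)
    obtain ⟨hA_le, hA_eq⟩ := det_le_prod_and_eq_iff_isMarkov c (m + 1) _ (fun i j => hc _ _) hA
      (fun i => hdiag _)
    obtain ⟨hC_le, hC_eq⟩ := hC.det_le_det_submatrix_castSucc_mul (e := Fin.last m) (hdiag _)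
    simp only [hdiag, hc, Fin.val_castSucc, Fin.val_last] at hC_le hC_eq
    rw [Nat.add_sub_cancel] at hA_le hA_eq
    rw [Nat.add_succ_sub_one, prod_range_succ]
    have hq : 0 < 1 - c m (m + 1) ^ 2 :=
      pos_of_mul_pos_right (hC.det_pos.trans_le hC_le) hA.det_pos.le
    have hm : c m m = 1 := by simpa [hc] using hdiag (Fin.last m).castSucc
    refine ⟨hC_le.trans (mul_le_mul_of_nonneg_right hA_le hq.le), ?_⟩
    rw [eq_mul_iff_of_le_mul_of_le hC_le hA_le hq, hC_eq, hA_eq, isMarkov_succ_succ_iff hm,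
      Fin.forall_iff, and_comm]

/-- For a correlation matrix `C` (symmetric positive definite with unit diagonal),
`det C ≤ ∏ (1 - C_{i,i+1}²)`, with equality iff `C` has the Markov product structure.
The function `c : ℕ → ℕ → ℝ` gives the entries of `C` over natural number indices. -/
theorem stmt3 (n : ℕ) (C : Matrix (Fin n) (Fin n) ℝ) (c : ℕ → ℕ → ℝ)
    (hc : ∀ i j : Fin n, C i j = c (i : ℕ) (j : ℕ))
    (hpd : C.PosDef) (hdiag : ∀ i : Fin n, C i i = 1) :
    C.det ≤ ∏ i ∈ Finset.range (n - 1), (1 - c i (i + 1) ^ 2) ∧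
    (C.det = ∏ i ∈ Finset.range (n - 1), (1 - c i (i + 1) ^ 2) ↔
      ∀ k l : Fin n, (k : ℕ) < (l : ℕ) →
        c (k : ℕ) (l : ℕ) = ∏ j ∈ Finset.Ico (k : ℕ) (l : ℕ), c j (j + 1)) := by
  rw [← isMarkov_iff_forall_fin]
  exact det_le_prod_and_eq_iff_isMarkov c n C hc hpd hdiag
end

section
/- Let (e_1,...,e_n) be a basis of unit vectors in ℝ^n with dual basis (f_1,...,f_n) (i.e., ⟨f_i, e_j⟩ = δ_{ij}). If ⟨e_k, e_l⟩ = ∏_{j=k}^{l-1} ⟨e_j, e_{j+1}⟩ for all k < l, then ⟨f_i, f_j⟩ = 0 whenever |i - j| ≥ 2. -/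
/-!
Put `g 1 = e 1` and `g q = e q - ⟪e (q - 1), e q⟫ • e (q - 1)`. The Markov identity makes
`g q` orthogonal to `e 1, …, e (q - 1)`, so the `g q` are pairwise orthogonal (they are the
Gram–Schmidt vectors of `e`), and duality gives `⟪f a, g q⟫ = 0` unless `q ∈ {a, a + 1}`, while
`⟪f q, g q⟫ = 1`. Hence the `g q` form an orthogonal basis, and in the Parseval expansion of
`⟪f i, f j⟫` along it every term has a vanishing factor once `|i - j| ≥ 2`.
-/

open Finset RealInnerProductSpace Module

variable {E : Type*} [NormedAddCommGroup E] [InnerProductSpace ℝ E]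

theorem inner_eq_zero_of_forall_inner_eq_zero_or {ι : Type*} [Fintype ι] [FiniteDimensional ℝ E]
    {g : ι → E} (hg0 : ∀ k, g k ≠ 0) (hg : Pairwise fun k l => ⟪g k, g l⟫ = 0)
    (hcard : Fintype.card ι = finrank ℝ E) {x y : E}
    (h : ∀ k, ⟪x, g k⟫ = 0 ∨ ⟪g k, y⟫ = 0) : ⟪x, y⟫ = 0 := by
  have hon : Orthonormal ℝ fun k => ‖g k‖⁻¹ • g k :=
    ⟨fun k => norm_smul_inv_norm (hg0 k), fun k l hkl => by
      simp only [real_inner_smul_left, real_inner_smul_right, hg hkl, mul_zero]⟩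
  let b := OrthonormalBasis.mk hon (hon.linearIndependent.span_eq_top_of_card_eq_finrank' hcard).ge
  rw [← b.sum_inner_mul_inner x y]
  refine sum_eq_zero fun k _ => ?_
  simp only [b, OrthonormalBasis.coe_mk, real_inner_smul_left, real_inner_smul_right]
  rcases h k with h | h <;> simp [h]

def markovResidual (e : ℕ → E) : ℕ → E
  | 0 => 0
  | 1 => e 1
  | q + 2 => e (q + 2) - ⟪e (q + 1), e (q + 2)⟫ • e (q + 1)

section Markov

variable {n : ℕ} {e f : ℕ → E}

theorem inner_eq_prod_Ico_of_le (hunit : ∀ i, 1 ≤ i → i ≤ n → ‖e i‖ = 1)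
    (hmarkov : ∀ k l, 1 ≤ k → k < l → l ≤ n →
      ⟪e k, e l⟫ = ∏ j ∈ Ico k l, ⟪e j, e (j + 1)⟫)
    (k l : ℕ) (hk : 1 ≤ k) (hkl : k ≤ l) (hl : l ≤ n) :
    ⟪e k, e l⟫ = ∏ j ∈ Ico k l, ⟪e j, e (j + 1)⟫ := by
  rcases hkl.eq_or_lt with rfl | hkl
  · rw [Ico_self, prod_empty, real_inner_self_eq_norm_sq, hunit k hk hl, one_pow]
  · exact hmarkov k l hk hkl hl

theorem inner_markovResidual_of_lt
    (hgram : ∀ k l, 1 ≤ k → k ≤ l → l ≤ n → ⟪e k, e l⟫ = ∏ j ∈ Ico k l, ⟪e j, e (j + 1)⟫)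
    {k q : ℕ} (hk : 1 ≤ k) (hkq : k < q) (hq : q ≤ n) :
    ⟪e k, markovResidual e q⟫ = 0 := by
  obtain ⟨q, rfl⟩ : ∃ r, q = r + 2 := ⟨q - 2, by omega⟩
  rw [markovResidual, inner_sub_right, real_inner_smul_right, hgram k _ hk (by omega) hq,
    hgram k _ hk (by omega) (by omega), prod_Ico_succ_top (by omega)]
  ring

theorem inner_markovResidual_markovResidual_of_lt
    (hgram : ∀ k l, 1 ≤ k → k ≤ l → l ≤ n → ⟪e k, e l⟫ = ∏ j ∈ Ico k l, ⟪e j, e (j + 1)⟫)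
    {p q : ℕ} (hp : 1 ≤ p) (hpq : p < q) (hq : q ≤ n) :
    ⟪markovResidual e p, markovResidual e q⟫ = 0 := by
  match p, hp with
  | 1, _ => exact inner_markovResidual_of_lt hgram le_rfl hpq hq
  | p + 2, _ =>
    rw [markovResidual, inner_sub_left, real_inner_smul_left,
      inner_markovResidual_of_lt hgram (by omega) hpq hq,
      inner_markovResidual_of_lt hgram (by omega) (by omega) hq, mul_zero, sub_zero]

theorem inner_dual_markovResidual (hdual : ∀ i j, 1 ≤ i → i ≤ n → 1 ≤ j → j ≤ n →
      ⟪f i, e j⟫ = if i = j then (1 : ℝ) else 0)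
    {a q : ℕ} (ha : 1 ≤ a) (han : a ≤ n) (hq : 1 ≤ q) (hqn : q ≤ n) :
    ⟪f a, markovResidual e q⟫ =
      (if a = q then 1 else 0) - if a + 1 = q then ⟪e a, e q⟫ else 0 := by
  match q, hq with
  | 1, _ =>
    rw [markovResidual, hdual a 1 ha han le_rfl hqn, if_neg (show a + 1 ≠ 1 by omega), sub_zero]
  | q + 2, _ =>
    rw [markovResidual, inner_sub_right, real_inner_smul_right, hdual a _ ha han (by omega) hqn,
      hdual a _ ha han (by omega) (by omega)]
    split_ifs <;> first | omega | subst_vars; ring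

end Markov

theorem stmt4_general (n : ℕ) (e f : ℕ → EuclideanSpace ℝ (Fin n))
    (hunit : ∀ i, 1 ≤ i → i ≤ n → ‖e i‖ = 1)
    (hdual : ∀ i j, 1 ≤ i → i ≤ n → 1 ≤ j → j ≤ n →
      ⟪f i, e j⟫ = if i = j then (1 : ℝ) else 0)
    (hmarkov : ∀ k l, 1 ≤ k → k < l → l ≤ n →
      ⟪e k, e l⟫ = ∏ j ∈ Finset.Ico k l, ⟪e j, e (j + 1)⟫) :
    ∀ i j, 1 ≤ i → i ≤ n → 1 ≤ j → j ≤ n → (i + 2 ≤ j ∨ j + 2 ≤ i) →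
      ⟪f i, f j⟫ = 0 := by
  intro i j hi hin hj hjn hij
  have hgram := inner_eq_prod_Ico_of_le hunit hmarkov
  have hf (a : ℕ) (ha : 1 ≤ a) (han : a ≤ n) (k : Fin n) :=
    inner_dual_markovResidual (e := e) hdual ha han (q := k + 1) (by omega) k.isLt
  refine inner_eq_zero_of_forall_inner_eq_zero_or (g := fun k : Fin n => markovResidual e (k + 1))
    (fun k hk => ?_) (fun k l hkl => ?_) (by simp) fun k => ?_
  · simpa [hk] using hf (k + 1) (by omega) k.isLt k
  · rcases lt_or_gt_of_ne (Fin.val_ne_of_ne hkl) with h | h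
    · exact inner_markovResidual_markovResidual_of_lt hgram (by omega) (by omega) l.isLt
    · rw [real_inner_comm]
      exact inner_markovResidual_markovResidual_of_lt hgram (by omega) (by omega) k.isLt
  · rw [real_inner_comm (f j), hf i hi hin k, hf j hj hjn k]
    by_cases hk : i = k + 1 ∨ i + 1 = k + 1
    · right; rw [if_neg (by omega), if_neg (by omega), sub_zero]
    · left; rw [if_neg (by omega), if_neg (by omega), sub_zero]

/-- If a basis `e_1,…,e_n` of unit vectors of `ℝ^n` has the Markov (multiplicative) inner
product structure, then the Gram matrix of the dual basis `f_1,…,f_n` is tridiagonal. -/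
theorem stmt4 (n : ℕ) (e f : ℕ → EuclideanSpace ℝ (Fin n))
    (hunit : ∀ i, 1 ≤ i → i ≤ n → ‖e i‖ = 1)
    (hbasis : LinearIndependent ℝ (fun i : Fin n => e ((i : ℕ) + 1)))
    (hdual : ∀ i j, 1 ≤ i → i ≤ n → 1 ≤ j → j ≤ n →
      ⟪f i, e j⟫ = if i = j then (1 : ℝ) else 0)
    (hmarkov : ∀ k l, 1 ≤ k → k < l → l ≤ n →
      ⟪e k, e l⟫ = ∏ j ∈ Finset.Ico k l, ⟪e j, e (j + 1)⟫) :
    ∀ i j, 1 ≤ i → i ≤ n → 1 ≤ j → j ≤ n → (i + 2 ≤ j ∨ j + 2 ≤ i) →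
      ⟪f i, f j⟫ = 0 :=
  stmt4_general n e f hunit hdual hmarkov
end

section
/- Let (e_1,...,e_n) be a basis of unit vectors in ℝ^n with ⟨e_k, e_l⟩ = ∏_{j=k}^{l-1} ⟨e_j, e_{j+1}⟩ for all k < l, and assume |⟨e_i, e_{i+1}⟩| < 1 for all i. Then its dual basis satisfies f_i = β_{i-1} e_{i-1} + α_i e_i + β_i e_{i+1}, where α_i = (1 - ⟨e_{i-1},e_i⟩²⟨e_i,e_{i+1}⟩²)/((1-⟨e_{i-1},e_i⟩²)(1-⟨e_i,e_{i+1}⟩²)), β_i = -⟨e_i,e_{i+1}⟩/(1-⟨e_i,e_{i+1}⟩²), with the convention e_0 = e_{n+1} = 0 and the corresponding boundary terms omitted. -/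
open Finset RealInnerProductSpace

/-!
The Gram matrix of a Markov system is `⟪e_k, e_l⟫ = ρ_k ⋯ ρ_{l-1}`, so for `j < i` the three
vectors `e_{i-1}, e_i, e_{i+1}` pair with `e_j` to `c, c ρ_{i-1}, c ρ_{i-1} ρ_i` for a common
factor `c`, and symmetrically for `j > i`. The proposed `f_i` is the tridiagonal combination
whose coefficients kill these patterns and give `1` at `j = i`; a vector is determined by its
inner products with a basis.
-/

variable {E : Type*} [NormedAddCommGroup E] [InnerProductSpace ℝ E]

structure IsMarkovSystem (n : ℕ) (e : ℕ → E) (ρ : ℕ → ℝ) : Prop where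
  eq_zero_of_out : ∀ j, j = 0 ∨ n < j → e j = 0
  corr_eq : ∀ j, ρ j = ⟪e j, e (j + 1)⟫
  norm_eq_one : ∀ i, 1 ≤ i → i ≤ n → ‖e i‖ = 1
  inner_eq_prod : ∀ k l, 1 ≤ k → k < l → l ≤ n → ⟪e k, e l⟫ = ∏ j ∈ Ico k l, ρ j

namespace IsMarkovSystem

variable {n : ℕ} {e : ℕ → E} {ρ : ℕ → ℝ}

theorem corr_zero (h : IsMarkovSystem n e ρ) : ρ 0 = 0 := by
  rw [h.corr_eq, h.eq_zero_of_out 0 (Or.inl rfl), inner_zero_left]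

theorem corr_last (h : IsMarkovSystem n e ρ) : ρ n = 0 := by
  rw [h.corr_eq, h.eq_zero_of_out (n + 1) (Or.inr n.lt_succ_self), inner_zero_right]

/-- The zero padding forces `ρ 0 = ρ n = 0`, which extends the product formula to the
range `0, …, n + 1`. -/
theorem inner_eq_prod_Ico (h : IsMarkovSystem n e ρ) {k l : ℕ} (hkl : k ≤ l) (hl : 1 ≤ l)
    (hk : k ≤ n) (hl' : l ≤ n + 1) : ⟪e k, e l⟫ = ∏ j ∈ Ico k l, ρ j := by
  rcases hkl.eq_or_lt with rfl | hkl
  · rw [Ico_self, prod_empty, real_inner_self_eq_norm_sq, h.norm_eq_one k hl (by omega), one_pow]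
  by_cases hk0 : k = 0
  · subst hk0
    rw [h.eq_zero_of_out 0 (Or.inl rfl), inner_zero_left,
      prod_eq_zero (left_mem_Ico.2 hkl) h.corr_zero]
  by_cases hln : l = n + 1
  · subst hln
    rw [h.eq_zero_of_out (n + 1) (Or.inr n.lt_succ_self), inner_zero_right,
      prod_eq_zero (mem_Ico.2 ⟨hk, n.lt_succ_self⟩) h.corr_last]
  exact h.inner_eq_prod k l (by omega) hkl (by omega)

theorem one_sub_corr_sq_ne_zero (h : IsMarkovSystem n e ρ)
    (hsmall : ∀ i, 1 ≤ i → i + 1 ≤ n → |ρ i| < 1) {j : ℕ} (hj : j ≤ n) : 1 - ρ j ^ 2 ≠ 0 := by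
  have : ρ j ^ 2 < 1 := by
    rcases Nat.eq_zero_or_pos j with rfl | hj0
    · simp [h.corr_zero]
    rcases hj.eq_or_lt with rfl | hjn
    · simp [h.corr_last]
    exact (sq_lt_one_iff_abs_lt_one _).2 (hsmall j hj0 hjn)
  linarith

/-- The candidate dual vector, written around the index `m + 1` so that no natural
subtraction occurs. -/
theorem inner_dual_combination (h : IsMarkovSystem n e ρ)
    (hsmall : ∀ i, 1 ≤ i → i + 1 ≤ n → |ρ i| < 1) {m j : ℕ} (hm : m < n) (hj : 1 ≤ j)
    (hjn : j ≤ n) :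
    ⟪(-ρ m / (1 - ρ m ^ 2)) • e m
        + ((1 - ρ m ^ 2 * ρ (m + 1) ^ 2) / ((1 - ρ m ^ 2) * (1 - ρ (m + 1) ^ 2))) • e (m + 1)
        + (-ρ (m + 1) / (1 - ρ (m + 1) ^ 2)) • e (m + 1 + 1), e j⟫
      = if m + 1 = j then 1 else 0 := by
  have ha := h.one_sub_corr_sq_ne_zero hsmall hm.le
  have hb := h.one_sub_corr_sq_ne_zero hsmall (j := m + 1) hm
  simp only [inner_add_left, real_inner_smul_left]
  rcases lt_trichotomy j (m + 1) with hjm | rfl | hjm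
  · rw [real_inner_comm (e j) (e m), real_inner_comm (e j) (e (m + 1)),
      real_inner_comm (e j) (e (m + 1 + 1)),
      h.inner_eq_prod_Ico (by omega) (by omega) (by omega) (by omega),
      h.inner_eq_prod_Ico (by omega) (by omega) (by omega) (by omega),
      h.inner_eq_prod_Ico (by omega) (by omega) (by omega) (by omega),
      prod_Ico_succ_top (b := m + 1) (by omega), prod_Ico_succ_top (b := m) (by omega), if_neg (by omega)]
    field_simp
    ring
  · rw [h.inner_eq_prod_Ico (by omega) (by omega) (by omega) (by omega),
      h.inner_eq_prod_Ico le_rfl (by omega) (by omega) (by omega), real_inner_comm,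
      h.inner_eq_prod_Ico (by omega) (by omega) (by omega) (by omega),
      Nat.Ico_succ_singleton, Nat.Ico_succ_singleton, Ico_self, prod_singleton, prod_singleton,
      prod_empty, if_pos rfl]
    field_simp
    ring
  · rw [h.inner_eq_prod_Ico (by omega) (by omega) (by omega) (by omega),
      h.inner_eq_prod_Ico (by omega) (by omega) (by omega) (by omega),
      h.inner_eq_prod_Ico (by omega) (by omega) (by omega) (by omega),
      prod_eq_prod_Ico_succ_bot (by omega), prod_eq_prod_Ico_succ_bot (by omega),
      if_neg (by omega)]
    field_simp
    ring

end IsMarkovSystem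

theorem stmt5_general (n : ℕ) (e f : ℕ → EuclideanSpace ℝ (Fin n)) (ρ : ℕ → ℝ)
    (hconv : ∀ j, j = 0 ∨ n < j → e j = 0)
    (hρ : ∀ j, ρ j = ⟪e j, e (j + 1)⟫)
    (hunit : ∀ i, 1 ≤ i → i ≤ n → ‖e i‖ = 1)
    (hsmall : ∀ i, 1 ≤ i → i + 1 ≤ n → |ρ i| < 1)
    (hbasis : LinearIndependent ℝ (fun i : Fin n => e ((i : ℕ) + 1)))
    (hdual : ∀ i j, 1 ≤ i → i ≤ n → 1 ≤ j → j ≤ n →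
      ⟪f i, e j⟫ = if i = j then (1 : ℝ) else 0)
    (hmarkov : ∀ k l, 1 ≤ k → k < l → l ≤ n →
      ⟪e k, e l⟫ = ∏ j ∈ Finset.Ico k l, ρ j) :
    ∀ i, 1 ≤ i → i ≤ n →
      f i = (-ρ (i - 1) / (1 - ρ (i - 1) ^ 2)) • e (i - 1)
          + ((1 - ρ (i - 1) ^ 2 * ρ i ^ 2) / ((1 - ρ (i - 1) ^ 2) * (1 - ρ i ^ 2))) • e i
          + (-ρ i / (1 - ρ i ^ 2)) • e (i + 1) := by
  have h : IsMarkovSystem n e ρ := ⟨hconv, hρ, hunit, hmarkov⟩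
  intro i hi hin
  obtain ⟨m, rfl⟩ : ∃ m, i = m + 1 := Nat.exists_eq_add_one.2 hi
  rw [Nat.add_sub_cancel]
  let b := basisOfLinearIndependentOfCardEqFinrank' _ hbasis (by simp)
  refine InnerProductSpace.ext_inner_right_basis b fun k => ?_
  rw [coe_basisOfLinearIndependentOfCardEqFinrank', hdual _ _ (by omega) hin (by omega) (by omega),
    h.inner_dual_combination hsmall hin (by omega) (by omega)]

/-- For a basis `e_1,…,e_n` of unit vectors of `ℝ^n` with the Markov inner product structure,
the dual basis is `f_i = β_{i-1} e_{i-1} + α_i e_i + β_i e_{i+1}`, with the convention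
`e_0 = e_{n+1} = 0` (so the boundary terms vanish automatically, since
`ρ_j = ⟪e_j, e_{j+1}⟫ = 0` for `j = 0` and `j = n`). -/
theorem stmt5 (n : ℕ) (hn : 1 ≤ n) (e f : ℕ → EuclideanSpace ℝ (Fin n)) (ρ : ℕ → ℝ)
    (hconv : ∀ j, j = 0 ∨ n < j → e j = 0)
    (hρ : ∀ j, ρ j = ⟪e j, e (j + 1)⟫)
    (hunit : ∀ i, 1 ≤ i → i ≤ n → ‖e i‖ = 1)
    (hsmall : ∀ i, 1 ≤ i → i + 1 ≤ n → |ρ i| < 1)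
    (hbasis : LinearIndependent ℝ (fun i : Fin n => e ((i : ℕ) + 1)))
    (hdual : ∀ i j, 1 ≤ i → i ≤ n → 1 ≤ j → j ≤ n →
      ⟪f i, e j⟫ = if i = j then (1 : ℝ) else 0)
    (hmarkov : ∀ k l, 1 ≤ k → k < l → l ≤ n →
      ⟪e k, e l⟫ = ∏ j ∈ Finset.Ico k l, ρ j) :
    ∀ i, 1 ≤ i → i ≤ n →
      f i = (-ρ (i - 1) / (1 - ρ (i - 1) ^ 2)) • e (i - 1)
          + ((1 - ρ (i - 1) ^ 2 * ρ i ^ 2) / ((1 - ρ (i - 1) ^ 2) * (1 - ρ i ^ 2))) • e i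
          + (-ρ i / (1 - ρ i ^ 2)) • e (i + 1) :=
  stmt5_general n e f ρ hconv hρ hunit hsmall hbasis hdual hmarkov
end

section
/- Let (e_1,...,e_n) be a basis of ℝ^n with dual basis (f_1,...,f_n), and suppose ⟨f_i, f_j⟩ = 0 whenever |i-j| ≥ 2. Let P_k denote the orthogonal projection onto span{e_1,...,e_k}. Then for every 1 ≤ k ≤ n-1, P_k e_{k+1} is a scalar multiple of e_k. -/
/-! Put `w = e_{k+1} - P_k e_{k+1}`. Expanding in the dual basis, `w = ∑ ⟪w, e_j⟫ f_j`, where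
the terms with `j ≤ k` vanish because `w ⊥ e_j`; the remaining `f_j` (`j ≥ k + 1`) are orthogonal
to every `f_i` with `i ≤ k - 1`, so `⟪f_i, P_k e_{k+1}⟫ = ⟪f_i, e_{k+1}⟫ = 0` for those `i`. As
the coefficient of `e_i` in a vector of `span{e_1, …, e_k}` is its inner product with `f_i`, only
the `e_k`-coefficient of `P_k e_{k+1}` survives. -/

open Finset RealInnerProductSpace

variable {E ι : Type*} [NormedAddCommGroup E] [InnerProductSpace ℝ E] [DecidableEq ι]

def IsBiorthogonalOn (s : Finset ι) (e f : ι → E) : Prop :=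
  ∀ i ∈ s, ∀ j ∈ s, ⟪f i, e j⟫ = if i = j then 1 else 0

namespace IsBiorthogonalOn

variable {s t : Finset ι} {e f : ι → E}

theorem symm (h : IsBiorthogonalOn s e f) : IsBiorthogonalOn s f e := fun i hi j hj => by
  rw [real_inner_comm, h j hj i hi]
  exact if_congr eq_comm rfl rfl

theorem linearIndependent (h : IsBiorthogonalOn s e f) :
    LinearIndependent ℝ (fun i : s => e i) := by
  rw [Fintype.linearIndependent_iff]
  intro c hc j
  have hj := congrArg (⟪f j, ·⟫) hc
  simp only [inner_sum, real_inner_smul_right, inner_zero_right] at hj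
  rwa [Finset.sum_eq_single j (fun i _ hij => by
      rw [h _ j.2 _ i.2, if_neg (fun h => hij (Subtype.ext h).symm), mul_zero]) (by simp),
    h _ j.2 _ j.2, if_pos rfl, mul_one] at hj

theorem span_eq_top [FiniteDimensional ℝ E] (h : IsBiorthogonalOn s e f)
    (hcard : #s = Module.finrank ℝ E) : Submodule.span ℝ (e '' s) = ⊤ := by
  rw [Set.image_eq_range]
  exact h.linearIndependent.span_eq_top_of_card_eq_finrank' (by simpa using hcard)

theorem sum_inner_smul_eq [FiniteDimensional ℝ E] (h : IsBiorthogonalOn s e f)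
    (hcard : #s = Module.finrank ℝ E) (v : E) : ∑ j ∈ s, ⟪v, e j⟫ • f j = v := by
  refine ext_inner_right ℝ fun u => ?_
  have hlin : innerₗ E (∑ j ∈ s, ⟪v, e j⟫ • f j) = innerₗ E v := by
    refine LinearMap.ext_on (h.span_eq_top hcard) ?_
    rintro _ ⟨i, hi, rfl⟩
    simp only [innerₗ_apply_apply, sum_inner, real_inner_smul_left]
    rw [Finset.sum_congr rfl fun j hj => by rw [h j hj i hi, mul_ite, mul_one, mul_zero],
      Finset.sum_ite_eq' s i, if_pos (Finset.mem_coe.mp hi)]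
  exact congrArg (· u) hlin

theorem inner_eq_zero_of_mem_span (h : IsBiorthogonalOn s e f) (hts : t ⊆ s) {i : ι}
    (hi : i ∈ s \ t) {v : E} (hv : v ∈ Submodule.span ℝ (e '' t)) : ⟪f i, v⟫ = 0 := by
  rw [mem_sdiff] at hi
  refine (Submodule.mem_orthogonal_singleton_iff_inner_right (𝕜 := ℝ)).mp
    (Submodule.span_le.mpr ?_ hv)
  rintro _ ⟨j, hj, rfl⟩
  rw [SetLike.mem_coe, Submodule.mem_orthogonal_singleton_iff_inner_right, h i hi.1 j (hts hj),
    if_neg (ne_of_mem_of_not_mem hj hi.2).symm]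

theorem inner_starProjection_eq [FiniteDimensional ℝ E] (h : IsBiorthogonalOn s e f)
    (hcard : #s = Module.finrank ℝ E) {i : ι} (hi : ∀ j ∈ s \ t, ⟪f i, f j⟫ = 0) (v : E) :
    ⟪f i, (Submodule.span ℝ (e '' t)).starProjection v⟫ = ⟪f i, v⟫ := by
  set K := Submodule.span ℝ (e '' t)
  have hperp : ⟪f i, v - K.starProjection v⟫ = 0 := by
    rw [← h.sum_inner_smul_eq hcard (v - K.starProjection v), inner_sum]
    refine sum_eq_zero fun j hj => ?_
    rw [real_inner_smul_right]
    by_cases hjt : j ∈ t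
    · rw [K.starProjection_inner_eq_zero v (e j) (Submodule.subset_span ⟨j, hjt, rfl⟩), zero_mul]
    · rw [hi j (mem_sdiff.mpr ⟨hj, hjt⟩), mul_zero]
  rwa [inner_sub_right, sub_eq_zero, eq_comm] at hperp

theorem eq_smul_of_mem_span [FiniteDimensional ℝ E] (h : IsBiorthogonalOn s e f)
    (hcard : #s = Module.finrank ℝ E) (hts : t ⊆ s) {k : ι} (hk : k ∈ s) {v : E}
    (hv : v ∈ Submodule.span ℝ (e '' t)) (hvk : ∀ j ∈ t, j ≠ k → ⟪f j, v⟫ = 0) :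
    v = ⟪f k, v⟫ • e k := by
  conv_lhs => rw [← h.symm.sum_inner_smul_eq hcard v]
  refine (sum_eq_single k (fun j hj hjk => ?_) (absurd hk)).trans (by rw [real_inner_comm])
  rw [real_inner_comm]
  by_cases hjt : j ∈ t
  · rw [hvk j hjt hjk, zero_smul]
  · rw [h.inner_eq_zero_of_mem_span hts (mem_sdiff.mpr ⟨hj, hjt⟩) hv, zero_smul]

end IsBiorthogonalOn

theorem stmt6_general (n : ℕ) (e f : ℕ → EuclideanSpace ℝ (Fin n))
    (hdual : ∀ i j, 1 ≤ i → i ≤ n → 1 ≤ j → j ≤ n →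
      ⟪f i, e j⟫ = if i = j then (1 : ℝ) else 0)
    (htri : ∀ i j, 1 ≤ i → i ≤ n → 1 ≤ j → j ≤ n → (i + 2 ≤ j ∨ j + 2 ≤ i) →
      ⟪f i, f j⟫ = 0) :
    ∀ k, 1 ≤ k → k ≤ n - 1 →
      ∃ a : ℝ, (Submodule.orthogonalProjectionOnto (Submodule.span ℝ (e '' Set.Icc 1 k)) (e (k + 1)) :
        EuclideanSpace ℝ (Fin n)) = a • e k := by
  intro k hk1 hkn
  have hbi : IsBiorthogonalOn (Icc 1 n) e f := fun i hi j hj => by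
    rw [mem_Icc] at hi hj
    exact hdual i j hi.1 hi.2 hj.1 hj.2
  have hcard : #(Icc 1 n) = Module.finrank ℝ (EuclideanSpace ℝ (Fin n)) := by simp
  rw [← coe_Icc, Submodule.coe_orthogonalProjectionOnto_apply]
  refine ⟨_, hbi.eq_smul_of_mem_span hcard (Icc_subset_Icc_right (by omega))
    (mem_Icc.mpr ⟨hk1, by omega⟩) (Submodule.starProjection_apply_mem _ _) fun j hj hjk => ?_⟩
  rw [mem_Icc] at hj
  rw [hbi.inner_starProjection_eq hcard (fun l hl => ?_), hdual j (k + 1) hj.1 (by omega)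
    (by omega) (by omega), if_neg (by omega)]
  simp only [mem_sdiff, mem_Icc] at hl
  exact htri j l hj.1 (by omega) hl.1.1 hl.1.2 (Or.inl (by omega))

/-- If the Gram matrix of the dual basis `f_1,…,f_n` of a basis `e_1,…,e_n` of `ℝ^n` is
tridiagonal, then the orthogonal projection of `e_{k+1}` onto `span{e_1,…,e_k}` is a scalar
multiple of `e_k`. -/
theorem stmt6 (n : ℕ) (e f : ℕ → EuclideanSpace ℝ (Fin n))
    (hbasis : LinearIndependent ℝ (fun i : Fin n => e ((i : ℕ) + 1)))
    (hdual : ∀ i j, 1 ≤ i → i ≤ n → 1 ≤ j → j ≤ n →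
      ⟪f i, e j⟫ = if i = j then (1 : ℝ) else 0)
    (htri : ∀ i j, 1 ≤ i → i ≤ n → 1 ≤ j → j ≤ n → (i + 2 ≤ j ∨ j + 2 ≤ i) →
      ⟪f i, f j⟫ = 0) :
    ∀ k, 1 ≤ k → k ≤ n - 1 →
      ∃ a : ℝ, (Submodule.orthogonalProjectionOnto (Submodule.span ℝ (e '' Set.Icc 1 k)) (e (k + 1)) :
        EuclideanSpace ℝ (Fin n)) = a • e k :=
  stmt6_general n e f hdual htri
end

section
/- Let (e_1,...,e_n) be a basis of unit vectors in ℝ^n and P_k the orthogonal projection onto span{e_1,...,e_k}. If for every 1 ≤ k ≤ n-1 the vector P_k e_{k+1} is parallel to e_k, then ⟨e_k, e_l⟩ = ∏_{j=k}^{l-1} ⟨e_j, e_{j+1}⟩ for all 1 ≤ k < l ≤ n. -/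
open Finset RealInnerProductSpace

/-! Since `e j` lies in `span {e 1, …, e l}` for `j ≤ l`, pairing it with `e (l + 1)` is the same as
pairing it with `P_l e (l + 1) = a • e l`; taking `j = l` and `‖e l‖ = 1` identifies `a` with
`⟪e l, e (l + 1)⟫`. Hence `⟪e j, e (l + 1)⟫ = ⟪e l, e (l + 1)⟫ * ⟪e j, e l⟫`, which telescopes. -/

theorem Finset.eq_prod_Ico_of_forall_lt_eq_mul {M : Type*} [CommMonoid M] {c : ℕ → ℕ → M}
    {k n : ℕ} (h : ∀ l, k < l → l < n → c k (l + 1) = c l (l + 1) * c k l)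
    {l : ℕ} (hkl : k < l) (hln : l ≤ n) : c k l = ∏ j ∈ Ico k l, c j (j + 1) := by
  induction l, hkl using Nat.le_induction with
  | base => simp
  | succ l hkl ih =>
    rw [h l hkl hln, ih (by omega), prod_Ico_succ_top (by omega), mul_comm]

theorem Submodule.inner_eq_inner_mul_inner_of_orthogonalProjectionOnto_eq_smul {F : Type*}
    [NormedAddCommGroup F] [InnerProductSpace ℝ F] (K : Submodule ℝ F) [K.HasOrthogonalProjection]
    {x y z : F} {a : ℝ} (hx : x ∈ K) (hx1 : ‖x‖ = 1) (hz : z ∈ K)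
    (hy : (K.orthogonalProjectionOnto y : F) = a • x) : ⟪z, y⟫ = ⟪x, y⟫ * ⟪z, x⟫ := by
  have inner_eq : ∀ w ∈ K, ⟪w, y⟫ = a * ⟪w, x⟫ := fun w hw => by
    rw [← inner_orthogonalProjectionOnto_eq_of_mem_left ⟨w, hw⟩ y, K.coe_inner, hy,
      real_inner_smul_right]
  rw [inner_eq z hz, inner_eq x hx, real_inner_self_eq_norm_sq, hx1]
  ring

theorem stmt7_general (n : ℕ) (e : ℕ → EuclideanSpace ℝ (Fin n))
    (hunit : ∀ i, 1 ≤ i → i ≤ n → ‖e i‖ = 1)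
    (hproj : ∀ k, 1 ≤ k → k ≤ n - 1 →
      ∃ a : ℝ, (Submodule.orthogonalProjectionOnto (Submodule.span ℝ (e '' Set.Icc 1 k)) (e (k + 1)) :
        EuclideanSpace ℝ (Fin n)) = a • e k) :
    ∀ k l, 1 ≤ k → k < l → l ≤ n →
      ⟪e k, e l⟫ = ∏ j ∈ Finset.Ico k l, ⟪e j, e (j + 1)⟫ := by
  intro k l hk hkl hln
  refine eq_prod_Ico_of_forall_lt_eq_mul (c := fun i j => ⟪e i, e j⟫) (fun m hkm hmn => ?_) hkl hln
  obtain ⟨a, ha⟩ := hproj m (by omega) (by omega)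
  have mem_span : ∀ i, 1 ≤ i → i ≤ m → e i ∈ Submodule.span ℝ (e '' Set.Icc 1 m) :=
    fun i h1 h2 => Submodule.subset_span ⟨i, ⟨h1, h2⟩, rfl⟩
  exact Submodule.inner_eq_inner_mul_inner_of_orthogonalProjectionOnto_eq_smul _
    (mem_span m (by omega) le_rfl) (hunit m (by omega) (by omega)) (mem_span k hk hkm.le) ha

/-- If for a basis `e_1,…,e_n` of unit vectors of `ℝ^n` each orthogonal projection of `e_{k+1}`
onto `span{e_1,…,e_k}` is parallel to `e_k`, then the inner products have the Markov
multiplicative structure. -/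
theorem stmt7 (n : ℕ) (e : ℕ → EuclideanSpace ℝ (Fin n))
    (hunit : ∀ i, 1 ≤ i → i ≤ n → ‖e i‖ = 1)
    (hbasis : LinearIndependent ℝ (fun i : Fin n => e ((i : ℕ) + 1)))
    (hproj : ∀ k, 1 ≤ k → k ≤ n - 1 →
      ∃ a : ℝ, (Submodule.orthogonalProjectionOnto (Submodule.span ℝ (e '' Set.Icc 1 k)) (e (k + 1)) :
        EuclideanSpace ℝ (Fin n)) = a • e k) :
    ∀ k l, 1 ≤ k → k < l → l ≤ n →
      ⟪e k, e l⟫ = ∏ j ∈ Finset.Ico k l, ⟪e j, e (j + 1)⟫ :=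
  stmt7_general n e hunit hproj
end

section
/- Let (e_1,...,e_n) be a basis of unit vectors in ℝ^n, P_k the orthogonal projection onto S_k = span{e_1,...,e_k}, and T_m = span{e_{n-m+1},...,e_n}. If for every 1 ≤ k ≤ n-1 and every v ∈ T_{n-k} one has P_k v equal to the orthogonal projection of v onto the line spanned by e_k, then for every 1 ≤ k ≤ n-1, P_k e_{k+1} is parallel to e_k. Conversely, if P_k e_{k+1} is parallel to e_k for all k, then P_k v equals the projection of v onto span{e_k} for every v ∈ T_{n-k}. -/
/-!
Write `P_k` for the projection onto `S_k = span{e_1,…,e_k}`. Since `S_k ≤ S_j` for `k ≤ j`, we have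
`P_k = P_k P_j`; so if each `P_j e_{j+1}` is a multiple of `e_j`, then `P_k e_{j+1}` is a multiple
of `P_k e_j`, and by induction on `j > k` every `P_k e_j` lies on the line `ℝ e_k`. Whenever
`P_k x` lies on that line it is also the projection of `x` onto it, since `x - P_k x ⊥ S_k ⊇ ℝ e_k`.
Both projections are linear, so they agree on all of `T_{n-k} = span{e_{k+1},…,e_n}`.
-/

namespace Submodule

variable {𝕜 E : Type*} [RCLike 𝕜] [NormedAddCommGroup E] [InnerProductSpace 𝕜 E]

theorem starProjection_starProjection_of_le {U V : Submodule 𝕜 E}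
    [U.HasOrthogonalProjection] [V.HasOrthogonalProjection] (h : U ≤ V) (x : E) :
    U.starProjection (V.starProjection x) = U.starProjection x :=
  congrArg Subtype.val (orthogonalProjectionOnto_starProjection_of_le h x)

theorem starProjection_eq_of_starProjection_mem {U V : Submodule 𝕜 E}
    [U.HasOrthogonalProjection] [V.HasOrthogonalProjection] (h : U ≤ V) {x : E}
    (hx : V.starProjection x ∈ U) : U.starProjection x = V.starProjection x := by
  rw [← starProjection_starProjection_of_le h, starProjection_eq_self_iff.mpr hx]

theorem starProjection_mem_span_singleton_of_le {U V : Submodule 𝕜 E}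
    [U.HasOrthogonalProjection] [V.HasOrthogonalProjection] (h : U ≤ V) {x y : E}
    (hy : V.starProjection y ∈ 𝕜 ∙ x) : U.starProjection y ∈ 𝕜 ∙ U.starProjection x := by
  obtain ⟨a, ha⟩ := mem_span_singleton.mp hy
  rw [← starProjection_starProjection_of_le h y, ← ha, map_smul]
  exact smul_mem _ a (mem_span_singleton_self _)

end Submodule

section Flag

open Submodule

variable {𝕜 E : Type*} [RCLike 𝕜] [NormedAddCommGroup E] [InnerProductSpace 𝕜 E]
  [FiniteDimensional 𝕜 E] (e : ℕ → E) {n k : ℕ}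

theorem starProjection_span_image_Icc_mem_span_singleton
    (h : ∀ j, k ≤ j → j < n → (span 𝕜 (e '' Set.Icc 1 j)).starProjection (e (j + 1)) ∈ 𝕜 ∙ e j)
    {j : ℕ} (hkj : k < j) (hjn : j ≤ n) :
    (span 𝕜 (e '' Set.Icc 1 k)).starProjection (e j) ∈ 𝕜 ∙ e k := by
  induction j, hkj using Nat.le_induction with
  | base => exact h k le_rfl hjn
  | succ j hkj ih =>
    have hle : span 𝕜 (e '' Set.Icc 1 k) ≤ span 𝕜 (e '' Set.Icc 1 j) :=
      span_mono (Set.image_mono (Set.Icc_subset_Icc_right (by omega)))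
    refine span_le.mpr ?_ (starProjection_mem_span_singleton_of_le hle (h j (by omega) hjn))
    exact Set.singleton_subset_iff.mpr (ih (by omega))

theorem starProjection_span_image_Icc_eq_starProjection_span_singleton (hk : 1 ≤ k)
    (h : ∀ j, k ≤ j → j < n → (span 𝕜 (e '' Set.Icc 1 j)).starProjection (e (j + 1)) ∈ 𝕜 ∙ e j)
    {v : E} (hv : v ∈ span 𝕜 (e '' Set.Icc (k + 1) n)) :
    (span 𝕜 (e '' Set.Icc 1 k)).starProjection v = (𝕜 ∙ e k).starProjection v := by
  have hline : (𝕜 ∙ e k) ≤ span 𝕜 (e '' Set.Icc 1 k) :=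
    span_mono (Set.singleton_subset_iff.mpr ⟨k, ⟨hk, le_rfl⟩, rfl⟩)
  refine LinearMap.eqOn_span' ?_ hv
  rintro _ ⟨j, ⟨hkj, hjn⟩, rfl⟩
  exact (starProjection_eq_of_starProjection_mem hline
    (starProjection_span_image_Icc_mem_span_singleton e h hkj hjn)).symm

end Flag

theorem stmt8_general (n : ℕ) (e : ℕ → EuclideanSpace ℝ (Fin n)) :
    (∀ k, 1 ≤ k → k ≤ n - 1 →
      ∀ v ∈ Submodule.span ℝ (e '' Set.Icc (k + 1) n),
        (Submodule.orthogonalProjection (Submodule.span ℝ (e '' Set.Icc 1 k)) v :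
            EuclideanSpace ℝ (Fin n)) =
          (Submodule.orthogonalProjection (Submodule.span ℝ {e k}) v : EuclideanSpace ℝ (Fin n)))
    ↔
    (∀ k, 1 ≤ k → k ≤ n - 1 →
      ∃ a : ℝ, (Submodule.orthogonalProjection (Submodule.span ℝ (e '' Set.Icc 1 k)) (e (k + 1)) :
        EuclideanSpace ℝ (Fin n)) = a • e k) := by
  simp only [Submodule.orthogonalProjection, Submodule.coe_orthogonalProjectionOnto_apply]
  constructor
  · intro h k hk hkn
    rw [h k hk hkn _ (Submodule.subset_span ⟨k + 1, ⟨le_rfl, by omega⟩, rfl⟩)]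
    obtain ⟨a, ha⟩ :=
      Submodule.mem_span_singleton.mp ((ℝ ∙ e k).starProjection_apply_mem (e (k + 1)))
    exact ⟨a, ha.symm⟩
  · intro h k hk hkn v hv
    refine starProjection_span_image_Icc_eq_starProjection_span_singleton e hk
      (fun j hkj hjn => ?_) hv
    obtain ⟨a, ha⟩ := h j (by omega) (by omega)
    exact Submodule.mem_span_singleton.mpr ⟨a, ha.symm⟩

/-- For a basis `e_1,…,e_n` of unit vectors of `ℝ^n`, with `S_k = span{e_1,…,e_k}`,
`T_m = span{e_{n-m+1},…,e_n}` and `M_k = span{e_k}`: the projections `P_k` and `M_k` agree on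
`T_{n-k}` for all `1 ≤ k ≤ n-1` if and only if `P_k e_{k+1}` is parallel to `e_k` for all
`1 ≤ k ≤ n-1`. -/
theorem stmt8 (n : ℕ) (e : ℕ → EuclideanSpace ℝ (Fin n))
    (hunit : ∀ i, 1 ≤ i → i ≤ n → ‖e i‖ = 1)
    (hbasis : LinearIndependent ℝ (fun i : Fin n => e ((i : ℕ) + 1))) :
    (∀ k, 1 ≤ k → k ≤ n - 1 →
      ∀ v ∈ Submodule.span ℝ (e '' Set.Icc (k + 1) n),
        (Submodule.orthogonalProjection (Submodule.span ℝ (e '' Set.Icc 1 k)) v :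
            EuclideanSpace ℝ (Fin n)) =
          (Submodule.orthogonalProjection (Submodule.span ℝ {e k}) v : EuclideanSpace ℝ (Fin n)))
    ↔
    (∀ k, 1 ≤ k → k ≤ n - 1 →
      ∃ a : ℝ, (Submodule.orthogonalProjection (Submodule.span ℝ (e '' Set.Icc 1 k)) (e (k + 1)) :
        EuclideanSpace ℝ (Fin n)) = a • e k) :=
  stmt8_general n e
end

section
/- Let (e_1,...,e_n) be a basis of unit vectors in ℝ^n, M_k the orthogonal projection onto span{e_k}, and M_k' = I - M_k. Suppose for every 1 ≤ k ≤ n-1 the orthogonal projection of e_{k+1} onto span{e_1,...,e_k} is parallel to e_k. Then for every 2 ≤ k ≤ n-1 the subspaces M_k'(span{e_1,...,e_{k-1}}) and M_k'(span{e_{k+1},...,e_n}) are orthogonal. -/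
open Finset RealInnerProductSpace

/-!
Write `F m = span{e_1,…,e_m}` and `P_m` for the orthogonal projection onto it. Since `F m ≤ F (m+1)`,
`P_m = P_m ∘ P_{m+1}`, so the hypothesis propagates down the flag: `P_k e_j ∈ ℝ e_k` for all `j > k`.
For `u ∈ F k` this gives `⟪u, e_j⟫ = ⟪u, P_k e_j⟫ = ⟪e_k, u⟫ ⟪e_k, e_j⟫`, and by linearity
`⟪u, w⟫ = ⟪e_k, u⟫ ⟪e_k, w⟫` for `w ∈ span{e_{k+1},…,e_n}`. As `‖e_k‖ = 1`, the inner product of the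
projections of `u` and `w` onto `e_kᗮ` is exactly `⟪u, w⟫ - ⟪e_k, u⟫ ⟪e_k, w⟫`, hence zero.
-/

namespace Submodule

variable {E : Type*} [NormedAddCommGroup E] [InnerProductSpace ℝ E]

theorem starProjection_eq_smul_of_le {K L : Submodule ℝ E} [K.HasOrthogonalProjection]
    [L.HasOrthogonalProjection] (hKL : K ≤ L) {x y z : E} {c a : ℝ}
    (hx : L.starProjection x = c • y) (hy : K.starProjection y = a • z) :
    K.starProjection x = (c * a) • z := by
  rw [← starProjection_comp_starProjection_of_le hKL, ContinuousLinearMap.comp_apply, hx,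
    map_smul, hy, smul_smul]

theorem inner_starProjection_right_of_mem {K : Submodule ℝ E} [K.HasOrthogonalProjection]
    {u : E} (hu : u ∈ K) (v : E) : ⟪u, K.starProjection v⟫ = ⟪u, v⟫ := by
  rw [← inner_starProjection_left_eq_right, starProjection_eq_self_iff.2 hu]

theorem inner_eq_inner_mul_inner_of_starProjection_eq_smul {K : Submodule ℝ E}
    [K.HasOrthogonalProjection] {u v w : E} (hu : u ∈ K) (hv : v ∈ K) (hv1 : ‖v‖ = 1) {c : ℝ}
    (hw : K.starProjection w = c • v) : ⟪u, w⟫ = ⟪v, u⟫ * ⟪v, w⟫ := by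
  rw [← inner_starProjection_right_of_mem hu w, ← inner_starProjection_right_of_mem hv w, hw,
    real_inner_smul_right, real_inner_smul_right, real_inner_self_eq_norm_sq, hv1,
    real_inner_comm]
  ring

theorem inner_eq_inner_mul_inner_of_mem_span {u v : E} {s : Set E}
    (hs : ∀ w ∈ s, ⟪u, w⟫ = ⟪v, u⟫ * ⟪v, w⟫) {w : E} (hw : w ∈ span ℝ s) :
    ⟪u, w⟫ = ⟪v, u⟫ * ⟪v, w⟫ :=
  LinearMap.eqOn_span (f := innerₛₗ ℝ u) (g := ⟪v, u⟫ • innerₛₗ ℝ v) hs hw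

theorem inner_starProjection_orthogonal_span_singleton {v : E} (hv : ‖v‖ = 1) (u w : E) :
    ⟪(ℝ ∙ v)ᗮ.starProjection u, (ℝ ∙ v)ᗮ.starProjection w⟫ = ⟪u, w⟫ - ⟪v, u⟫ * ⟪v, w⟫ := by
  rw [inner_starProjection_left_eq_right, ← ContinuousLinearMap.comp_apply,
    starProjection_comp_starProjection_of_le le_rfl, starProjection_orthogonal_val,
    starProjection_singleton, hv]
  simp only [one_pow, RCLike.ofReal_one, div_one, inner_sub_right, real_inner_smul_right,
    real_inner_comm]
  ring

end Submodule

open Submodule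

section Flag

variable {E : Type*} [NormedAddCommGroup E] [InnerProductSpace ℝ E] [FiniteDimensional ℝ E]

theorem starProjection_span_Icc_eq_smul {N : ℕ} {e : ℕ → E}
    (hproj : ∀ k, 1 ≤ k → k ≤ N - 1 →
      ∃ a : ℝ, (span ℝ (e '' Set.Icc 1 k)).starProjection (e (k + 1)) = a • e k)
    {m i : ℕ} (hm : 1 ≤ m) (hmi : m ≤ i) (hiN : i < N) :
    ∃ c : ℝ, (span ℝ (e '' Set.Icc 1 m)).starProjection (e (i + 1)) = c • e m := by
  induction hmi using Nat.decreasingInduction with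
  | self => exact hproj i hm (by omega)
  | of_succ k hki ih =>
    obtain ⟨c, hc⟩ := ih (by omega)
    obtain ⟨a, ha⟩ := hproj k hm (by omega)
    exact ⟨c * a, starProjection_eq_smul_of_le
      (span_mono (Set.image_mono (Set.Icc_subset_Icc_right k.le_succ))) hc ha⟩

end Flag

theorem stmt9_general (n : ℕ) (e : ℕ → EuclideanSpace ℝ (Fin n))
    (hunit : ∀ i, 1 ≤ i → i ≤ n → ‖e i‖ = 1)
    (hproj : ∀ k, 1 ≤ k → k ≤ n - 1 →
      ∃ a : ℝ, (Submodule.orthogonalProjectionOnto (Submodule.span ℝ (e '' Set.Icc 1 k)) (e (k + 1)) :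
        EuclideanSpace ℝ (Fin n)) = a • e k) :
    ∀ k, 2 ≤ k → k ≤ n - 1 →
      ∀ u ∈ Submodule.span ℝ (e '' Set.Icc 1 (k - 1)),
      ∀ w ∈ Submodule.span ℝ (e '' Set.Icc (k + 1) n),
        ⟪(Submodule.orthogonalProjectionOnto (Submodule.span ℝ {e k})ᗮ u : EuclideanSpace ℝ (Fin n)),
         (Submodule.orthogonalProjectionOnto (Submodule.span ℝ {e k})ᗮ w : EuclideanSpace ℝ (Fin n))⟫ = 0 := by
  intro k hk2 hkn u hu w hw
  have hek : ‖e k‖ = 1 := hunit k (by omega) (by omega)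
  have hu' : u ∈ span ℝ (e '' Set.Icc 1 k) :=
    span_mono (Set.image_mono (Set.Icc_subset_Icc_right (k.sub_le 1))) hu
  have hek' : e k ∈ span ℝ (e '' Set.Icc 1 k) := subset_span ⟨k, ⟨by omega, le_rfl⟩, rfl⟩
  rw [coe_orthogonalProjectionOnto_apply, coe_orthogonalProjectionOnto_apply,
    inner_starProjection_orthogonal_span_singleton hek, sub_eq_zero]
  refine inner_eq_inner_mul_inner_of_mem_span ?_ hw
  rintro _ ⟨j, ⟨hkj, hjn⟩, rfl⟩
  obtain ⟨c, hc⟩ := starProjection_span_Icc_eq_smul hproj (m := k) (i := j - 1)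
    (by omega) (by omega) (by omega)
  rw [Nat.sub_add_cancel (by omega)] at hc
  exact inner_eq_inner_mul_inner_of_starProjection_eq_smul hu' hek' hek hc

/-- If for a basis `e_1,…,e_n` of unit vectors of `ℝ^n` each projection of `e_{k+1}` onto
`span{e_1,…,e_k}` is parallel to `e_k`, then for `2 ≤ k ≤ n-1` the images under
`M_k' = orthogonal projection onto (span{e_k})ᗮ` of `span{e_1,…,e_{k-1}}` and of
`span{e_{k+1},…,e_n}` are orthogonal. -/
theorem stmt9 (n : ℕ) (e : ℕ → EuclideanSpace ℝ (Fin n))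
    (hunit : ∀ i, 1 ≤ i → i ≤ n → ‖e i‖ = 1)
    (hbasis : LinearIndependent ℝ (fun i : Fin n => e ((i : ℕ) + 1)))
    (hproj : ∀ k, 1 ≤ k → k ≤ n - 1 →
      ∃ a : ℝ, (Submodule.orthogonalProjectionOnto (Submodule.span ℝ (e '' Set.Icc 1 k)) (e (k + 1)) :
        EuclideanSpace ℝ (Fin n)) = a • e k) :
    ∀ k, 2 ≤ k → k ≤ n - 1 →
      ∀ u ∈ Submodule.span ℝ (e '' Set.Icc 1 (k - 1)),
      ∀ w ∈ Submodule.span ℝ (e '' Set.Icc (k + 1) n),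
        ⟪(Submodule.orthogonalProjectionOnto (Submodule.span ℝ {e k})ᗮ u : EuclideanSpace ℝ (Fin n)),
         (Submodule.orthogonalProjectionOnto (Submodule.span ℝ {e k})ᗮ w : EuclideanSpace ℝ (Fin n))⟫ = 0 :=
  stmt9_general n e hunit hproj
end

section
/- Let (e_1,...,e_n) be a basis of unit vectors in ℝ^n, M_k' the orthogonal projection onto the orthogonal complement of span{e_k}, and suppose for every 2 ≤ k ≤ n-1 the subspaces M_k'(span{e_1,...,e_{k-1}}) and M_k'(span{e_{k+1},...,e_n}) are orthogonal. Then for every 1 ≤ k ≤ n-1 and every v ∈ span{e_{k+1},...,e_n}, the orthogonal projection of v onto span{e_1,...,e_k} equals the orthogonal projection of v onto span{e_k}. -/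
/-! It suffices that `v - P v`, with `P` the projection onto `span {e k}`, is orthogonal to every
`e i` with `1 ≤ i ≤ k`. For `i = k` this is the defining property of `P`; for `i < k`, writing
`M = 1 - P` for the projection onto `(span {e k})ᗮ`, we have `⟪e i, v - P v⟫ = ⟪M (e i), M v⟫`,
which vanishes by hypothesis. -/

open RealInnerProductSpace

namespace Submodule

variable {𝕜 E : Type*} [RCLike 𝕜] [NormedAddCommGroup E] [InnerProductSpace 𝕜 E]

theorem starProjection_span_eq_of_inner_eq_zero {S : Set E} [(span 𝕜 S).HasOrthogonalProjection]
    {v w : E} (hw : w ∈ span 𝕜 S) (h : ∀ s ∈ S, inner 𝕜 s (v - w) = 0) :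
    (span 𝕜 S).starProjection v = w := by
  refine eq_starProjection_of_mem_orthogonal hw ?_
  have hortho : span 𝕜 S ⟂ span 𝕜 {v - w} := by
    simp only [isOrtho_span, Set.mem_singleton_iff, forall_eq]
    exact h
  exact hortho.symm.le (mem_span_singleton_self _)

theorem inner_starProjection_orthogonal_starProjection_orthogonal (K : Submodule 𝕜 E)
    [K.HasOrthogonalProjection] (x y : E) :
    inner 𝕜 (Kᗮ.starProjection x) (Kᗮ.starProjection y) = inner 𝕜 x (y - K.starProjection y) := by
  rw [inner_starProjection_left_eq_right,
    starProjection_eq_self_iff.2 (starProjection_apply_mem _ y), starProjection_orthogonal_val]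

end Submodule

open Submodule in
theorem stmt10_general (n : ℕ) (e : ℕ → EuclideanSpace ℝ (Fin n))
    (horth : ∀ k, 2 ≤ k → k ≤ n - 1 →
      ∀ u ∈ Submodule.span ℝ (e '' Set.Icc 1 (k - 1)),
      ∀ w ∈ Submodule.span ℝ (e '' Set.Icc (k + 1) n),
        ⟪(Submodule.orthogonalProjectionOnto (Submodule.span ℝ {e k})ᗮ u : EuclideanSpace ℝ (Fin n)),
         (Submodule.orthogonalProjectionOnto (Submodule.span ℝ {e k})ᗮ w : EuclideanSpace ℝ (Fin n))⟫ = 0) :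
    ∀ k, 1 ≤ k → k ≤ n - 1 →
      ∀ v ∈ Submodule.span ℝ (e '' Set.Icc (k + 1) n),
        (Submodule.orthogonalProjectionOnto (Submodule.span ℝ (e '' Set.Icc 1 k)) v :
            EuclideanSpace ℝ (Fin n)) =
          (Submodule.orthogonalProjectionOnto (Submodule.span ℝ {e k}) v : EuclideanSpace ℝ (Fin n)) := by
  intro k hk1 hkn v hv
  simp only [coe_orthogonalProjectionOnto_apply]
  have hek : e k ∈ span ℝ (e '' Set.Icc 1 k) := subset_span ⟨k, ⟨hk1, le_rfl⟩, rfl⟩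
  refine starProjection_span_eq_of_inner_eq_zero ?_ ?_
  · exact span_singleton_le_iff_mem _ _ |>.2 hek (starProjection_apply_mem _ v)
  rintro _ ⟨i, ⟨hi1, hik⟩, rfl⟩
  rcases hik.eq_or_lt with rfl | hik
  · exact inner_right_of_mem_orthogonal (mem_span_singleton_self _)
      (sub_starProjection_mem_orthogonal v)
  · rw [← inner_starProjection_orthogonal_starProjection_orthogonal]
    exact horth k (by omega) hkn _ (subset_span ⟨i, ⟨hi1, by omega⟩, rfl⟩) v hv

/-- If for a basis `e_1,…,e_n` of unit vectors of `ℝ^n` and every `2 ≤ k ≤ n-1` the images under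
`M_k' = orthogonal projection onto (span{e_k})ᗮ` of `span{e_1,…,e_{k-1}}` and of
`span{e_{k+1},…,e_n}` are orthogonal, then for every `1 ≤ k ≤ n-1` and every
`v ∈ span{e_{k+1},…,e_n}` the projection of `v` onto `span{e_1,…,e_k}` equals the projection of
`v` onto `span{e_k}`. -/
theorem stmt10 (n : ℕ) (e : ℕ → EuclideanSpace ℝ (Fin n))
    (hunit : ∀ i, 1 ≤ i → i ≤ n → ‖e i‖ = 1)
    (hbasis : LinearIndependent ℝ (fun i : Fin n => e ((i : ℕ) + 1)))
    (horth : ∀ k, 2 ≤ k → k ≤ n - 1 →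
      ∀ u ∈ Submodule.span ℝ (e '' Set.Icc 1 (k - 1)),
      ∀ w ∈ Submodule.span ℝ (e '' Set.Icc (k + 1) n),
        ⟪(Submodule.orthogonalProjectionOnto (Submodule.span ℝ {e k})ᗮ u : EuclideanSpace ℝ (Fin n)),
         (Submodule.orthogonalProjectionOnto (Submodule.span ℝ {e k})ᗮ w : EuclideanSpace ℝ (Fin n))⟫ = 0) :
    ∀ k, 1 ≤ k → k ≤ n - 1 →
      ∀ v ∈ Submodule.span ℝ (e '' Set.Icc (k + 1) n),
        (Submodule.orthogonalProjectionOnto (Submodule.span ℝ (e '' Set.Icc 1 k)) v :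
            EuclideanSpace ℝ (Fin n)) =
          (Submodule.orthogonalProjectionOnto (Submodule.span ℝ {e k}) v : EuclideanSpace ℝ (Fin n)) :=
  stmt10_general n e horth
end

section
/- Let X be a nondegenerate centered Gaussian vector in ℝ^n with correlation matrix R = {ρ_{ij}}. If for every 3 ≤ i ≤ n, E(X_i | X_1,...,X_{i-1}) = E(X_i | X_{i-1}) almost surely, then for all 1 ≤ k < l ≤ n, ρ_{kl} = ρ_{k,k+1} ρ_{k+1,k+2} ⋯ ρ_{l-1,l}. -/
/-!
For a centred Gaussian vector `X` with covariance `C`, the regression of `X_m` on `X_j` is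
`E(X_m | X_j) = (C j m / C j j) X_j`. Indeed the residual `v ⬝ᵥ X`, `v = e_m - (C j m / C j j) e_j`,
satisfies `(C v)_j = 0`, and the reflection `x ↦ x - 2 (v ⬝ᵥ x) / (v ⬝ᵥ C v) • C v` preserves
Lebesgue measure and the quadratic form of `C⁻¹`, hence the Gaussian law; it fixes `X_j` and
negates `v ⬝ᵥ X`, so `v ⬝ᵥ X` has zero integral on every event of `σ(X_j)`.

For `k < l - 1`, the Markov hypothesis and the tower property give
`E(X_l | X_k) = E(E(X_l | X_{l-1}) | X_k)`. Comparing the two resulting regression coefficients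
gives `C k l * C (l-1) (l-1) = C k (l-1) * C (l-1) l`, i.e. `ρ k l = ρ k (l-1) * ρ (l-1) l`, and
the product formula follows by induction on `l`.
-/

open Finset MeasureTheory ProbabilityTheory
open Matrix

namespace Matrix

variable {ι : Type*} [Fintype ι]

lemma sum_sum_mul_mul_eq_dotProduct_mulVec (M : Matrix ι ι ℝ) (x : ι → ℝ) :
    ∑ i, ∑ j, M i j * x i * x j = x ⬝ᵥ M *ᵥ x := by
  simp only [dotProduct, mulVec, Finset.mul_sum]
  exact Finset.sum_congr rfl fun i _ => Finset.sum_congr rfl fun j _ => by ring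

variable [DecidableEq ι]

lemma PosDef.exists_pos_mul_sum_sq_le {M : Matrix ι ι ℝ} (hM : M.PosDef) :
    ∃ δ > 0, ∀ x : ι → ℝ, δ * ∑ k, x k ^ 2 ≤ x ⬝ᵥ M *ᵥ x := by
  open scoped MatrixOrder in
  obtain ⟨S, hS, rfl⟩ : ∃ S : Matrix ι ι ℝ, Sᵀ = S ∧ M = S * S :=
    ⟨CFC.sqrt M, (CFC.sqrt_nonneg M).posSemidef.isHermitian,
      (CFC.sqrt_mul_sqrt_self M hM.posSemidef.nonneg).symm⟩
  have hS_unit : IsUnit S.det := by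
    refine isUnit_iff_ne_zero.mpr fun h => hM.det_pos.ne' ?_
    rw [det_mul, h, mul_zero]
  set K := ∑ i, ∑ j, S⁻¹ i j ^ 2
  have hK : 0 ≤ K := by positivity
  refine ⟨(K + 1)⁻¹, by positivity, fun x => ?_⟩
  have hquad : x ⬝ᵥ (S * S) *ᵥ x = ∑ k, (S *ᵥ x) k ^ 2 := by
    rw [← mulVec_mulVec, dotProduct_mulVec, ← mulVec_transpose, hS, dotProduct]
    exact Finset.sum_congr rfl fun k _ => (sq _).symm
  have hcs : ∑ k, x k ^ 2 ≤ K * ∑ k, (S *ᵥ x) k ^ 2 := by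
    have hx : S⁻¹ *ᵥ (S *ᵥ x) = x := by
      rw [mulVec_mulVec, nonsing_inv_mul S hS_unit, one_mulVec]
    conv_lhs => rw [← hx]
    rw [Finset.sum_mul]
    exact Finset.sum_le_sum fun i _ => sum_mul_sq_le_sq_mul_sq _ (S⁻¹ i) (S *ᵥ x)
  rw [hquad, inv_mul_le_iff₀ (by positivity)]
  nlinarith [hcs, show 0 ≤ ∑ k, (S *ᵥ x) k ^ 2 by positivity]

variable {C : Matrix ι ι ℝ} {v : ι → ℝ}

/-- The reflection fixing the hyperplane `v ⬝ᵥ x = 0` and negating `C *ᵥ v`. -/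
noncomputable def reflection (C : Matrix ι ι ℝ) (v : ι → ℝ) : Matrix ι ι ℝ :=
  1 - (2 / (v ⬝ᵥ C *ᵥ v)) • vecMulVec (C *ᵥ v) v

lemma reflection_mulVec (x : ι → ℝ) :
    reflection C v *ᵥ x = x - (2 / (v ⬝ᵥ C *ᵥ v) * (v ⬝ᵥ x)) • (C *ᵥ v) := by
  rw [reflection, sub_mulVec, one_mulVec, smul_mulVec, vecMulVec_mulVec, op_smul_eq_smul,
    smul_smul]

lemma dotProduct_reflection_mulVec (hv : v ⬝ᵥ C *ᵥ v ≠ 0) (x : ι → ℝ) :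
    v ⬝ᵥ reflection C v *ᵥ x = -(v ⬝ᵥ x) := by
  rw [reflection_mulVec, dotProduct_sub, dotProduct_smul, smul_eq_mul]
  field_simp
  ring

lemma reflection_mulVec_reflection_mulVec (hv : v ⬝ᵥ C *ᵥ v ≠ 0) (x : ι → ℝ) :
    reflection C v *ᵥ reflection C v *ᵥ x = x := by
  rw [reflection_mulVec (reflection C v *ᵥ x), dotProduct_reflection_mulVec hv,
    reflection_mulVec, sub_sub, ← add_smul, mul_neg, add_neg_cancel, zero_smul, sub_zero]

lemma abs_det_reflection (hv : v ⬝ᵥ C *ᵥ v ≠ 0) : |(reflection C v).det| = 1 := by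
  have hsq : reflection C v * reflection C v = 1 := mulVec_injective <| funext fun x => by
    rw [← mulVec_mulVec, reflection_mulVec_reflection_mulVec hv, one_mulVec]
  have hdet : (reflection C v).det * (reflection C v).det = 1 := by
    rw [← det_mul, hsq, det_one]
  rcases mul_self_eq_one_iff.mp hdet with h | h <;> simp [h]

lemma reflection_mulVec_apply_of_mulVec_apply_eq_zero {j : ι} (hj : (C *ᵥ v) j = 0)
    (x : ι → ℝ) : (reflection C v *ᵥ x) j = x j := by
  simp [reflection_mulVec, hj]

lemma dotProduct_inv_mulVec_reflection_mulVec (hC : C.IsHermitian) (hdet : IsUnit C.det)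
    (hv : v ⬝ᵥ C *ᵥ v ≠ 0) (x : ι → ℝ) :
    reflection C v *ᵥ x ⬝ᵥ C⁻¹ *ᵥ reflection C v *ᵥ x = x ⬝ᵥ C⁻¹ *ᵥ x := by
  have hinv : C⁻¹ *ᵥ C *ᵥ v = v := by rw [mulVec_mulVec, nonsing_inv_mul C hdet, one_mulVec]
  have hsymm : (C *ᵥ v) ⬝ᵥ C⁻¹ *ᵥ x = v ⬝ᵥ x := by
    rw [dotProduct_mulVec, ← mulVec_transpose, ← conjTranspose_eq_transpose_of_trivial,
      hC.inv.eq, hinv, dotProduct_comm]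
  rw [reflection_mulVec, mulVec_sub, mulVec_smul, hinv]
  simp only [sub_dotProduct, dotProduct_sub, smul_dotProduct, dotProduct_smul, smul_eq_mul,
    hsymm, dotProduct_comm x v, dotProduct_comm (C *ᵥ v) v]
  field_simp
  ring

noncomputable def reflectionEquiv (hv : v ⬝ᵥ C *ᵥ v ≠ 0) : (ι → ℝ) ≃ᵐ (ι → ℝ) where
  toFun x := reflection C v *ᵥ x
  invFun x := reflection C v *ᵥ x
  left_inv := reflection_mulVec_reflection_mulVec hv
  right_inv := reflection_mulVec_reflection_mulVec hv
  measurable_toFun := (continuous_const.matrix_mulVec continuous_id).measurable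
  measurable_invFun := (continuous_const.matrix_mulVec continuous_id).measurable

@[simp]
lemma reflectionEquiv_apply (hv : v ⬝ᵥ C *ᵥ v ≠ 0) (x : ι → ℝ) :
    reflectionEquiv hv x = reflection C v *ᵥ x := rfl

lemma map_reflectionEquiv_volume (hv : v ⬝ᵥ C *ᵥ v ≠ 0) :
    volume.map (reflectionEquiv hv) = volume := by
  have hdet : (reflection C v).det ≠ 0 := fun h => by simpa [h] using abs_det_reflection hv
  have h := Real.map_matrix_volume_pi_eq_smul_volume_pi hdet
  rwa [abs_inv, abs_det_reflection hv, inv_one, ENNReal.ofReal_one, one_smul] at h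

end Matrix

namespace MeasureTheory

variable {α : Type*} [MeasurableSpace α]

lemma map_withDensity_of_map_eq {ν : Measure α} {T : α ≃ᵐ α} (hT : ν.map T = ν)
    {f : α → ENNReal} (hf : ∀ x, f (T x) = f x) :
    (ν.withDensity f).map T = ν.withDensity f := by
  ext s hs
  rw [T.map_apply, withDensity_apply _ hs, withDensity_apply _ (T.measurable hs)]
  conv_rhs => rw [← hT, T.restrict_map, lintegral_map_equiv]
  simp only [hf]

lemma condExp_comap_ae_eq_zero_of_map_eq {β : Type*} [MeasurableSpace β] {μ : Measure α}
    [IsFiniteMeasure μ] {T : α ≃ᵐ α} (hT : μ.map T = μ) {g : α → β} (hg : Measurable g)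
    (hgT : ∀ x, g (T x) = g x) {f : α → ℝ} (hfT : ∀ x, f (T x) = -f x) :
    μ[f | MeasurableSpace.comap g inferInstance] =ᵐ[μ] 0 := by
  by_cases hf : Integrable f μ
  swap
  · rw [condExp_of_not_integrable hf]
  refine (ae_eq_condExp_of_forall_setIntegral_eq hg.comap_le hf (fun _ _ _ => integrableOn_zero)
    (fun s hs _ => ?_) aestronglyMeasurable_zero).symm
  obtain ⟨B, hB, rfl⟩ := hs
  have hinv : ∫ x in g ⁻¹' B, f x ∂μ = -∫ x in g ⁻¹' B, f x ∂μ := by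
    conv_lhs => rw [← hT]
    have hpre : T ⁻¹' (g ⁻¹' B) = g ⁻¹' B := by ext x; simp [hgT]
    rw [setIntegral_map_equiv, hpre, ← integral_neg]
    simp only [hfT]
  simp only [integral_zero]
  linarith

lemma eq_of_mul_apply_ae_eq {ι : Type*} [Fintype ι] {μ : Measure (ι → ℝ)} [NeZero μ]
    (hμ : μ ≪ volume) {a b : ℝ} {m : ι} (h : (fun x => a * x m) =ᵐ[μ] fun x => b * x m) :
    a = b := by
  have hker : volume (LinearMap.ker (LinearMap.proj m : (ι → ℝ) →ₗ[ℝ] ℝ) : Set (ι → ℝ)) = 0 :=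
    Measure.addHaar_submodule _ _ fun htop => by
      simpa using LinearMap.congr_fun (LinearMap.ker_eq_top.mp htop) fun _ => 1
  have hne : ∀ᵐ x ∂μ, x m ≠ 0 := hμ.ae_le (measure_eq_zero_iff_ae_notMem.mp hker)
  obtain ⟨x, hx, hxm⟩ := (h.and hne).exists
  exact mul_right_cancel₀ hxm hx

end MeasureTheory

section Gaussian

variable {ι : Type*} [Fintype ι]

noncomputable def gaussianDensity (c : ℝ) (M : Matrix ι ι ℝ) (x : ι → ℝ) : ENNReal :=
  ENNReal.ofReal (c * Real.exp (-(∑ i, ∑ j, M i j * x i * x j) / 2))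

lemma gaussianDensity_eq (c : ℝ) (M : Matrix ι ι ℝ) (x : ι → ℝ) :
    gaussianDensity c M x = ENNReal.ofReal (c * Real.exp (-(x ⬝ᵥ M *ᵥ x) / 2)) := by
  rw [gaussianDensity, sum_sum_mul_mul_eq_dotProduct_mulVec]

lemma measurable_gaussianDensity (c : ℝ) (M : Matrix ι ι ℝ) :
    Measurable (gaussianDensity c M) := by
  simp only [funext (gaussianDensity_eq c M)]
  fun_prop

variable [DecidableEq ι]

lemma integrable_apply_withDensity_gaussianDensity {c : ℝ} (hc : 0 ≤ c) {M : Matrix ι ι ℝ}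
    (hM : M.PosDef) (m : ι) :
    Integrable (fun x => x m) (volume.withDensity (gaussianDensity c M)) := by
  obtain ⟨δ, hδ, hlow⟩ := hM.exists_pos_mul_sum_sq_le
  rw [integrable_withDensity_iff (measurable_gaussianDensity c M)
    (.of_forall fun x => ENNReal.ofReal_lt_top)]
  set φ : ι → ℝ → ℝ := fun k t => (if k = m then |t| else 1) * Real.exp (-(δ / 2) * t ^ 2)
  have hφ : ∀ k, Integrable (φ k) := by
    intro k
    by_cases hk : k = m
    · simpa [φ, hk, abs_mul] using (integrable_mul_exp_neg_mul_sq (b := δ / 2) (by positivity)).abs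
    · simpa [φ, hk] using integrable_exp_neg_mul_sq (b := δ / 2) (by positivity)
  refine ((Integrable.fintype_prod (𝕜 := ℝ) hφ).const_mul c).mono' ?_ (.of_forall fun x => ?_)
  · exact ((measurable_pi_apply m).mul
      (measurable_gaussianDensity c M).ennreal_toReal).aestronglyMeasurable
  have hexp : Real.exp (-(x ⬝ᵥ M *ᵥ x) / 2) ≤ ∏ k, Real.exp (-(δ / 2) * x k ^ 2) := by
    rw [← Real.exp_sum, Real.exp_le_exp, ← Finset.mul_sum]
    linarith [hlow x]
  have hprod : ∏ k, φ k (x k) = |x m| * ∏ k, Real.exp (-(δ / 2) * x k ^ 2) := by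
    dsimp only [φ]
    rw [Finset.prod_mul_distrib, Finset.prod_ite_eq' Finset.univ m, if_pos (mem_univ m)]
  rw [gaussianDensity_eq, ENNReal.toReal_ofReal (mul_nonneg hc (Real.exp_pos _).le), hprod,
    Real.norm_eq_abs, abs_mul, abs_of_nonneg (mul_nonneg hc (Real.exp_pos _).le)]
  calc |x m| * (c * Real.exp (-(x ⬝ᵥ M *ᵥ x) / 2))
      = c * (|x m| * Real.exp (-(x ⬝ᵥ M *ᵥ x) / 2)) := by ring
    _ ≤ c * (|x m| * ∏ k, Real.exp (-(δ / 2) * x k ^ 2)) := by gcongr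

variable {C : Matrix ι ι ℝ} {v : ι → ℝ}

lemma map_reflectionEquiv_withDensity_gaussianDensity (hC : C.PosDef) (hv : v ⬝ᵥ C *ᵥ v ≠ 0)
    (c : ℝ) :
    (volume.withDensity (gaussianDensity c C⁻¹)).map (reflectionEquiv hv) =
      volume.withDensity (gaussianDensity c C⁻¹) :=
  map_withDensity_of_map_eq (map_reflectionEquiv_volume hv) fun x => by
    rw [gaussianDensity_eq, gaussianDensity_eq, reflectionEquiv_apply,
      dotProduct_inv_mulVec_reflection_mulVec hC.isHermitian hC.det_pos.ne'.isUnit hv]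

variable {μ : Measure (ι → ℝ)} {c : ℝ}

lemma condExp_dotProduct_comap_apply_ae_eq_zero [IsFiniteMeasure μ] (hC : C.PosDef)
    (hμ : μ = volume.withDensity (gaussianDensity c C⁻¹)) {j : ι} (hvj : (C *ᵥ v) j = 0) :
    μ[fun x => v ⬝ᵥ x | MeasurableSpace.comap (fun x => x j) inferInstance] =ᵐ[μ] 0 := by
  rcases eq_or_ne v 0 with rfl | hv0
  · simp only [zero_dotProduct]
    exact condExp_zero.eventuallyEq
  have hv : v ⬝ᵥ C *ᵥ v ≠ 0 := by simpa using (hC.dotProduct_mulVec_pos hv0).ne'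
  subst hμ
  exact condExp_comap_ae_eq_zero_of_map_eq
    (map_reflectionEquiv_withDensity_gaussianDensity hC hv c) (measurable_pi_apply j)
    (reflection_mulVec_apply_of_mulVec_apply_eq_zero hvj) (dotProduct_reflection_mulVec hv)

lemma condExp_apply_comap_apply [IsFiniteMeasure μ] (hC : C.PosDef) (hc : 0 ≤ c)
    (hμ : μ = volume.withDensity (gaussianDensity c C⁻¹)) (m j : ι) :
    μ[fun x => x m | MeasurableSpace.comap (fun x => x j) inferInstance] =ᵐ[μ]
      fun x => C j m / C j j * x j := by
  set β := C j m / C j j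
  set v : ι → ℝ := Pi.single m 1 - β • Pi.single j 1
  have hint : ∀ i, Integrable (fun x : ι → ℝ => x i) μ :=
    hμ ▸ integrable_apply_withDensity_gaussianDensity hc hC.inv
  have hdot : Integrable (fun x : ι → ℝ => v ⬝ᵥ x) μ :=
    integrable_finsetSum Finset.univ fun i _ => (hint i).const_mul (v i)
  have hvj : (C *ᵥ v) j = 0 := by
    simp [v, β, mulVec_sub, mulVec_smul, mulVec_single, hC.diag_pos.ne']
  have hsplit : (fun x : ι → ℝ => x m) = (fun x => v ⬝ᵥ x) + fun x => β * x j := by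
    ext x
    simp [v, sub_dotProduct, smul_dotProduct, single_dotProduct]
  have hβ : StronglyMeasurable[MeasurableSpace.comap (fun x : ι → ℝ => x j) inferInstance]
      fun x => β * x j :=
    ((comap_measurable _).const_mul β).stronglyMeasurable
  rw [hsplit]
  filter_upwards [condExp_add hdot ((hint j).const_mul β) _,
    condExp_dotProduct_comap_apply_ae_eq_zero hC hμ hvj] with x hadd hzero
  rw [hadd, Pi.add_apply, hzero,
    condExp_of_stronglyMeasurable (measurable_pi_apply j).comap_le hβ ((hint j).const_mul β)]
  simp

lemma mul_eq_mul_of_condExp_ae_eq [IsProbabilityMeasure μ] (hC : C.PosDef) (hc : 0 ≤ c)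
    (hμ : μ = volume.withDensity (gaussianDensity c C⁻¹)) {F : MeasurableSpace (ι → ℝ)}
    {l j m : ι} (hmF : MeasurableSpace.comap (fun x => x m) inferInstance ≤ F)
    (hF : F ≤ MeasurableSpace.pi)
    (h : μ[fun x => x l | F] =ᵐ[μ]
      μ[fun x => x l | MeasurableSpace.comap (fun x => x j) inferInstance]) :
    C m l * C j j = C m j * C j l := by
  set Gm := MeasurableSpace.comap (fun x : ι → ℝ => x m) inferInstance
  have hchain : (fun x => C m l / C m m * x m) =ᵐ[μ]
      fun x => C j l / C j j * (C m j / C m m) * x m :=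
    calc (fun x => C m l / C m m * x m)
        =ᵐ[μ] μ[fun x => x l | Gm] := (condExp_apply_comap_apply hC hc hμ l m).symm
      _ =ᵐ[μ] μ[μ[fun x => x l | F] | Gm] := (condExp_condExp_of_le hmF hF).symm
      _ =ᵐ[μ] μ[fun x => C j l / C j j * x j | Gm] :=
        (condExp_congr_ae h).trans (condExp_congr_ae (condExp_apply_comap_apply hC hc hμ l j))
      _ =ᵐ[μ] (C j l / C j j) • μ[fun x => x j | Gm] := condExp_smul (C j l / C j j) _ Gm
      _ =ᵐ[μ] fun x => C j l / C j j * (C m j / C m m) * x m := by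
        filter_upwards [condExp_apply_comap_apply hC hc hμ j m] with x hx
        rw [Pi.smul_apply, hx, smul_eq_mul, mul_assoc]
  have hcoeff := eq_of_mul_apply_ae_eq (hμ ▸ withDensity_absolutelyContinuous _ _) hchain
  field_simp [hC.diag_pos.ne'] at hcoeff
  linear_combination hcoeff

end Gaussian

namespace Matrix

variable {ι : Type*}

noncomputable def correlation (C : Matrix ι ι ℝ) (i j : ι) : ℝ :=
  C i j / (Real.sqrt (C i i) * Real.sqrt (C j j))

lemma correlation_eq_mul_of_mul_eq {C : Matrix ι ι ℝ} {k j l : ι} (hj : 0 < C j j)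
    (h : C k l * C j j = C k j * C j l) :
    C.correlation k l = C.correlation k j * C.correlation j l := by
  rw [correlation, correlation, correlation, div_mul_div_comm, ← h]
  have hsq : Real.sqrt (C j j) * Real.sqrt (C j j) = C j j := Real.mul_self_sqrt hj.le
  set b := Real.sqrt (C j j)
  have hb : b * b ≠ 0 := hsq ▸ hj.ne'
  rw [← hsq,
    show Real.sqrt (C k k) * b * (b * Real.sqrt (C l l)) =
      Real.sqrt (C k k) * Real.sqrt (C l l) * (b * b) by ring, mul_div_mul_right _ _ hb]

end Matrix

lemma eq_prod_Ico_of_eq_mul_succ {n : ℕ} {r : Fin n → Fin n → ℝ} {s : ℕ → ℝ}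
    (hs : ∀ (j : ℕ) (h : j + 1 < n), s j = r ⟨j, Nat.lt_of_succ_lt h⟩ ⟨j + 1, h⟩)
    (hr : ∀ (k l : Fin n) (h : (l : ℕ) + 1 < n), (k : ℕ) < l →
      r k ⟨l + 1, h⟩ = r k l * r l ⟨l + 1, h⟩)
    (k l : Fin n) (hkl : (k : ℕ) < l) : r k l = ∏ j ∈ Ico (k : ℕ) l, s j := by
  suffices ∀ l, (k : ℕ) + 1 ≤ l → ∀ hl : l < n, r k ⟨l, hl⟩ = ∏ j ∈ Ico (k : ℕ) l, s j from
    this l hkl l.isLt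
  refine Nat.le_induction (fun hl => ?_) (fun l hkl ih hl => ?_)
  · rw [Nat.Ico_succ_singleton, prod_singleton, hs]
  · rw [prod_Ico_succ_top (by omega), ← ih (by omega), hs l hl, hr k ⟨l, by omega⟩ hl hkl]

/-- For a nondegenerate centered Gaussian measure on `ℝ^n` with covariance `C` and correlation
coefficients `ρ i j`, if `E(X_i | X_0,…,X_{i-1}) = E(X_i | X_{i-1})` a.s. for all `i ≥ 2`
(0-based indices), then `ρ k l` is the product of the consecutive correlation coefficients
`ρcons j = ρ j (j+1)` for `k ≤ j < l`. -/
theorem stmt12 (n : ℕ) (C : Matrix (Fin n) (Fin n) ℝ) (hC : C.PosDef)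
    (μ : Measure (Fin n → ℝ)) [IsProbabilityMeasure μ]
    (hμ : μ = volume.withDensity fun x => ENNReal.ofReal
      ((Real.sqrt ((2 * Real.pi) ^ n * C.det))⁻¹ *
        Real.exp (-(∑ i, ∑ j, C⁻¹ i j * x i * x j) / 2)))
    (ρ : Fin n → Fin n → ℝ)
    (hρ : ∀ i j : Fin n, ρ i j = C i j / (Real.sqrt (C i i) * Real.sqrt (C j j)))
    (ρcons : ℕ → ℝ)
    (hcons : ∀ (j : ℕ) (h : j + 1 < n), ρcons j = ρ ⟨j, by omega⟩ ⟨j + 1, h⟩)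
    (hcond : ∀ i : Fin n, 2 ≤ (i : ℕ) →
      μ[(fun x => x i) |
          MeasurableSpace.comap (fun x (j : Fin n) => if (j : ℕ) < (i : ℕ) then x j else 0)
            inferInstance]
        =ᵐ[μ]
      μ[(fun x => x i) |
          MeasurableSpace.comap (fun x => x ⟨(i : ℕ) - 1, by have := i.isLt; omega⟩)
            inferInstance]) :
    ∀ k l : Fin n, (k : ℕ) < (l : ℕ) →
      ρ k l = ∏ j ∈ Finset.Ico (k : ℕ) (l : ℕ), ρcons j := by
  obtain rfl : ρ = C.correlation := funext₂ hρ
  refine eq_prod_Ico_of_eq_mul_succ hcons fun k l hl hkl => ?_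
  set past := fun (x : Fin n → ℝ) (j : Fin n) => if (j : ℕ) < l + 1 then x j else 0
  have hpast : Measurable past := measurable_pi_lambda _ fun j => by
    dsimp only [past]
    split_ifs <;> fun_prop
  have hk_past : MeasurableSpace.comap (fun x : Fin n → ℝ => x k) inferInstance ≤
      MeasurableSpace.comap past inferInstance := by
    have hfactor : (fun x : Fin n → ℝ => x k) = (fun y => y k) ∘ past :=
      funext fun x => (if_pos (by omega)).symm
    rw [hfactor]
    exact ((measurable_pi_apply k).comp (comap_measurable past)).comap_le
  exact C.correlation_eq_mul_of_mul_eq hC.diag_pos <| mul_eq_mul_of_condExp_ae_eq hC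
    (by positivity) hμ hk_past hpast.comap_le (hcond ⟨l + 1, hl⟩ (show 2 ≤ (l : ℕ) + 1 by omega))
end

section
/- Among all symmetric positive definite n×n matrices C with prescribed diagonal entries c_{ii} = σ_i² > 0 and prescribed first off-diagonal entries c_{i,i+1} = σ_i σ_{i+1} ρ_i with |ρ_i| < 1, the determinant det C is uniquely maximized, and the maximum value is (∏_{i=1}^n σ_i²) · ∏_{i=1}^{n-1}(1-ρ_i²), attained exactly when c_{kl} = σ_k σ_l ∏_{j=k}^{l-1} ρ_j for all k < l. -/
/-!
Induction on `n` by bordering. Write `C = [[A, c], [cᵀ, γ]]` with `A` the leading block. The Schur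
complement gives `det C = det A * (γ - cᵀ A⁻¹ c)`, and for every `v`,
`cᵀ A⁻¹ c = 2 cᵀv - vᵀAv + (c - Av)ᵀ A⁻¹ (c - Av) ≥ 2 cᵀv - vᵀAv`, with equality iff `Av = c`.
Regressing the last coordinate on the previous one only, `v = λ eₙ₋₁` with
`λ = σₙ ρₙ₋₁ / σₙ₋₁`, yields `γ - 2 cᵀv + vᵀAv = σₙ² (1 - ρₙ₋₁²)`, hence
`det C ≤ det A * σₙ² (1 - ρₙ₋₁²)`. Equality means `cⱼ = λ Aⱼ,ₙ₋₁` for all `j`, which together with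
the Markov form of `A` is exactly the Markov form of `C`.
-/

open Finset Matrix

section PosDef

variable {ι : Type*} [Fintype ι] [DecidableEq ι]

lemma Matrix.PosDef.dotProduct_inv_mulVec_eq {A : Matrix ι ι ℝ} (hA : A.PosDef) (c v : ι → ℝ) :
    c ⬝ᵥ A⁻¹ *ᵥ c =
      2 * (c ⬝ᵥ v) - v ⬝ᵥ A *ᵥ v + (c - A *ᵥ v) ⬝ᵥ A⁻¹ *ᵥ (c - A *ᵥ v) := by
  have hAt : Aᵀ = A := by simpa using hA.isHermitian.eq
  have hdet : IsUnit A.det := (isUnit_iff_isUnit_det A).mp hA.isUnit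
  have move (x y : ι → ℝ) : (A *ᵥ x) ⬝ᵥ y = x ⬝ᵥ A *ᵥ y := by
    rw [dotProduct_mulVec, ← vecMul_transpose, hAt]
  rw [mulVec_sub, sub_dotProduct, dotProduct_sub, dotProduct_sub, move, move, mulVec_mulVec,
    mulVec_mulVec, mul_nonsing_inv A hdet, nonsing_inv_mul A hdet, one_mulVec, one_mulVec,
    dotProduct_comm v c]
  ring

lemma Matrix.PosDef.two_mul_dotProduct_sub_le {A : Matrix ι ι ℝ} (hA : A.PosDef) (c v : ι → ℝ) :
    2 * (c ⬝ᵥ v) - v ⬝ᵥ A *ᵥ v ≤ c ⬝ᵥ A⁻¹ *ᵥ c ∧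
      (2 * (c ⬝ᵥ v) - v ⬝ᵥ A *ᵥ v = c ⬝ᵥ A⁻¹ *ᵥ c ↔ A *ᵥ v = c) := by
  have hpos {x : ι → ℝ} (hx : x ≠ 0) : 0 < x ⬝ᵥ A⁻¹ *ᵥ x := by
    simpa using hA.inv.dotProduct_mulVec_pos hx
  rw [hA.dotProduct_inv_mulVec_eq c v, left_eq_add, eq_comm (a := A *ᵥ v),
    ← sub_eq_zero (a := c)]
  obtain hx | hx := eq_or_ne (c - A *ᵥ v) 0
  · simp [hx]
  · exact ⟨le_add_of_nonneg_right (hpos hx).le, iff_of_false (hpos hx).ne' hx⟩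

end PosDef

section Bordering

variable {R : Type*} {m : ℕ}

def leadingBlock (M : Matrix (Fin (m + 1)) (Fin (m + 1)) R) : Matrix (Fin m) (Fin m) R :=
  M.submatrix Fin.castSucc Fin.castSucc

def lastCol (M : Matrix (Fin (m + 1)) (Fin (m + 1)) R) : Fin m → R :=
  fun i => M i.castSucc (Fin.last m)

def lastRow (M : Matrix (Fin (m + 1)) (Fin (m + 1)) R) : Fin m → R :=
  fun j => M (Fin.last m) j.castSucc

lemma submatrix_finSumFinEquiv_eq_fromBlocks (M : Matrix (Fin (m + 1)) (Fin (m + 1)) R) :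
    M.submatrix finSumFinEquiv finSumFinEquiv =
      fromBlocks (leadingBlock M) (of fun i (_ : Fin 1) => lastCol M i)
        (of fun (_ : Fin 1) j => lastRow M j) (of fun _ _ => M (Fin.last m) (Fin.last m)) := by
  have last_eq (j : Fin 1) : finSumFinEquiv (Sum.inr j) = Fin.last m := by
    rw [Fin.fin_one_eq_zero j]; rfl
  ext (i | i) (j | j) <;> simp [last_eq] <;> rfl

lemma det_eq_det_leadingBlock_mul [CommRing R] (M : Matrix (Fin (m + 1)) (Fin (m + 1)) R)
    (hA : IsUnit (leadingBlock M).det) :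
    M.det = (leadingBlock M).det *
      (M (Fin.last m) (Fin.last m) - lastRow M ⬝ᵥ (leadingBlock M)⁻¹ *ᵥ lastCol M) := by
  have := (leadingBlock M).invertibleOfIsUnitDet hA
  rw [← det_submatrix_equiv_self finSumFinEquiv M, submatrix_finSumFinEquiv_eq_fromBlocks,
    det_fromBlocks₁₁, det_fin_one, invOf_eq_nonsing_inv]
  simp only [Matrix.sub_apply, of_apply, mul_apply, mulVec, dotProduct, Finset.mul_sum,
    Finset.sum_mul]
  rw [Finset.sum_comm]
  simp only [mul_assoc]

lemma Matrix.PosDef.det_le_det_leadingBlock_mul {M : Matrix (Fin (m + 1)) (Fin (m + 1)) ℝ}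
    (hM : M.PosDef) (v : Fin m → ℝ) :
    M.det ≤ (leadingBlock M).det * (M (Fin.last m) (Fin.last m) - (2 * (lastCol M ⬝ᵥ v) -
        v ⬝ᵥ leadingBlock M *ᵥ v)) ∧
      (M.det = (leadingBlock M).det * (M (Fin.last m) (Fin.last m) - (2 * (lastCol M ⬝ᵥ v) -
        v ⬝ᵥ leadingBlock M *ᵥ v)) ↔ leadingBlock M *ᵥ v = lastCol M) := by
  have hA : (leadingBlock M).PosDef := hM.submatrix (Fin.castSucc_injective m)
  have hrow : lastRow M = lastCol M := funext fun j => by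
    simpa [lastRow, lastCol] using hM.isHermitian.apply j.castSucc (Fin.last m)
  obtain ⟨hle, heq⟩ := hA.two_mul_dotProduct_sub_le (lastCol M) v
  have hdet := hA.det_pos
  rw [det_eq_det_leadingBlock_mul M hdet.ne'.isUnit, hrow, ← heq, mul_right_inj' hdet.ne',
    sub_right_inj, eq_comm]
  exact ⟨by gcongr, Iff.rfl⟩

end Bordering

lemma Fin.forall_lt_imp_iff {m : ℕ} {P : Fin (m + 1) → Fin (m + 1) → Prop} :
    (∀ k l, k < l → P k l) ↔
      (∀ k l : Fin m, k < l → P k.castSucc l.castSucc) ∧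
        ∀ k : Fin m, P k.castSucc (Fin.last m) := by
  simp [Fin.forall_fin_succ', forall_and, Fin.castSucc_lt_last, not_lt_of_ge (Fin.le_last _)]

def markovCov (σ ρ : ℕ → ℝ) (k l : ℕ) : ℝ := σ k * σ l * ∏ j ∈ Ico k l, ρ j

def markovDet (σ ρ : ℕ → ℝ) (n : ℕ) : ℝ :=
  (∏ i ∈ range n, σ i ^ 2) * ∏ i ∈ range (n - 1), (1 - ρ i ^ 2)

section Markov

variable {σ ρ : ℕ → ℝ}

lemma markovCov_self (k : ℕ) : markovCov σ ρ k k = σ k ^ 2 := by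
  simp [markovCov, sq]

lemma markovCov_succ {k l : ℕ} (hkl : k ≤ l) (hσ : σ l ≠ 0) :
    markovCov σ ρ k (l + 1) = σ (l + 1) * ρ l / σ l * markovCov σ ρ k l := by
  rw [markovCov, markovCov, prod_Ico_succ_top hkl]
  field_simp

lemma markovDet_succ_succ (k : ℕ) :
    markovDet σ ρ (k + 2) = markovDet σ ρ (k + 1) * (σ (k + 1) ^ 2 * (1 - ρ k ^ 2)) := by
  rw [markovDet, markovDet, show k + 2 - 1 = k + 1 from rfl, Nat.add_sub_cancel,
    prod_range_succ (fun i => σ i ^ 2) (k + 1), prod_range_succ (fun i => 1 - ρ i ^ 2) k]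
  ring

lemma markov_iff_leadingBlock {k : ℕ} {C : Matrix (Fin (k + 2)) (Fin (k + 2)) ℝ}
    (hσ : σ k ≠ 0) (hdiag : ∀ i : Fin (k + 2), C i i = σ i ^ 2) :
    (∀ p q : Fin (k + 2), p < q → C p q = markovCov σ ρ p q) ↔
      (∀ p q : Fin (k + 1), p < q → leadingBlock C p q = markovCov σ ρ p q) ∧
        leadingBlock C *ᵥ (σ (k + 1) * ρ k / σ k) • Pi.single (Fin.last k) 1 = lastCol C := by
  rw [Fin.forall_lt_imp_iff]
  refine and_congr_right fun hA => ?_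
  have hcol (p : Fin (k + 1)) : leadingBlock C p (Fin.last k) = markovCov σ ρ p k := by
    obtain hp | hp := (Fin.le_last p).lt_or_eq
    · exact hA p _ hp
    · simpa [hp, markovCov_self, leadingBlock] using hdiag (Fin.last k).castSucc
  simp only [mulVec_smul, mulVec_single_one, funext_iff, Pi.smul_apply, col_apply, smul_eq_mul,
    hcol]
  refine forall_congr' fun p => ?_
  rw [← markovCov_succ (Nat.le_of_lt_succ p.isLt) hσ, eq_comm]
  rfl

end Markov

theorem det_le_markovDet (σ ρ : ℕ → ℝ) : ∀ (n : ℕ), (∀ i, i < n → 0 < σ i) →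
    (∀ i, i + 1 < n → |ρ i| < 1) → ∀ C : Matrix (Fin n) (Fin n) ℝ, C.PosDef →
    (∀ i : Fin n, C i i = σ i ^ 2) →
    (∀ (i : Fin n) (h : (i : ℕ) + 1 < n), C i ⟨i + 1, h⟩ = σ i * σ (i + 1) * ρ i) →
    C.det ≤ markovDet σ ρ n ∧
      (C.det = markovDet σ ρ n ↔ ∀ p q : Fin n, p < q → C p q = markovCov σ ρ p q)
  | 0, _, _, C, _, _, _ => by simp [markovDet]
  | 1, _, _, C, _, hdiag, _ => by simp [markovDet, hdiag, Fin.lt_def]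
  | k + 2, hσ, hρ, C, hC, hdiag, hoff => by
    obtain ⟨hAle, hAeq⟩ := det_le_markovDet σ ρ (k + 1) (fun i hi => hσ i (by omega))
      (fun i hi => hρ i (by omega)) (leadingBlock C) (hC.submatrix (Fin.castSucc_injective _))
      (fun i => hdiag i.castSucc) (fun i h => hoff i.castSucc (by simp; omega))
    have hσk := (hσ k (by omega)).ne'
    set v := (σ (k + 1) * ρ k / σ k) • Pi.single (Fin.last k) (1 : ℝ)
    obtain ⟨hCle, hCeq⟩ := hC.det_le_det_leadingBlock_mul v
    have hβ : C (Fin.last (k + 1)) (Fin.last (k + 1)) - (2 * (lastCol C ⬝ᵥ v) -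
        v ⬝ᵥ leadingBlock C *ᵥ v) = σ (k + 1) ^ 2 * (1 - ρ k ^ 2) := by
      have hc : lastCol C (Fin.last k) = σ k * σ (k + 1) * ρ k :=
        hoff (Fin.last k).castSucc (by simp)
      have ha : leadingBlock C (Fin.last k) (Fin.last k) = σ k ^ 2 := hdiag _
      have hγ : C (Fin.last (k + 1)) (Fin.last (k + 1)) = σ (k + 1) ^ 2 := hdiag _
      simp [v, mulVec_smul, hc, ha, hγ]
      field_simp
      ring
    have hβpos : 0 < σ (k + 1) ^ 2 * (1 - ρ k ^ 2) :=
      mul_pos (pow_pos (hσ (k + 1) (by omega)) 2)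
        (sub_pos.mpr ((sq_lt_one_iff_abs_lt_one _).mpr (hρ k (by omega))))
    rw [hβ] at hCle hCeq
    rw [markovDet_succ_succ, markov_iff_leadingBlock hσk hdiag, ← hAeq, ← hCeq]
    have hAβ := mul_le_mul_of_nonneg_right hAle hβpos.le
    refine ⟨hCle.trans hAβ, fun h => ?_, fun ⟨hA, hC⟩ => hC.trans (by rw [hA])⟩
    have hA := le_antisymm hAβ (h ▸ hCle)
    exact ⟨mul_right_cancel₀ hβpos.ne' hA, h.trans hA.symm⟩

/-- Among symmetric positive definite `n×n` matrices with prescribed variances `σ_i²` on the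
diagonal and prescribed consecutive covariances `σ_i σ_{i+1} ρ_i` (with `|ρ_i| < 1`), the
determinant is at most `(∏ σ_i²)·∏(1-ρ_i²)`, with equality exactly for the Markov matrix
`c_{kl} = σ_k σ_l ρ_k ⋯ ρ_{l-1}`. -/
theorem stmt15 (n : ℕ) (σ ρ : ℕ → ℝ)
    (hσ : ∀ i, i < n → 0 < σ i) (hρ : ∀ i, i + 1 < n → |ρ i| < 1)
    (C : Matrix (Fin n) (Fin n) ℝ) (hC : C.PosDef)
    (hdiag : ∀ i : Fin n, C i i = σ (i : ℕ) ^ 2)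
    (hoff : ∀ (i : Fin n) (h : (i : ℕ) + 1 < n),
      C i ⟨(i : ℕ) + 1, h⟩ = σ (i : ℕ) * σ ((i : ℕ) + 1) * ρ (i : ℕ)) :
    C.det ≤ (∏ i ∈ Finset.range n, σ i ^ 2) * ∏ i ∈ Finset.range (n - 1), (1 - ρ i ^ 2) ∧
    (C.det = (∏ i ∈ Finset.range n, σ i ^ 2) * ∏ i ∈ Finset.range (n - 1), (1 - ρ i ^ 2) ↔
      ∀ k l : Fin n, (k : ℕ) < (l : ℕ) →
        C k l = σ (k : ℕ) * σ (l : ℕ) * ∏ j ∈ Finset.Ico (k : ℕ) (l : ℕ), ρ j) := by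
  exact det_le_markovDet σ ρ n hσ hρ C hC hdiag hoff
end

section
/- Let (e_1,...,e_n) be unit vectors in a real inner product space with prescribed consecutive inner products ⟨e_i, e_{i+1}⟩ = ρ_i, |ρ_i| < 1. Then the Gram determinant det(⟨e_i, e_j⟩) is at most ∏_{i=1}^{n-1}(1-ρ_i²), and equality holds if and only if for every 1 ≤ k ≤ n-1 the orthogonal projection of e_{k+1} onto span{e_1,...,e_k} is parallel to e_k. -/
/-!
Let `g₁, …, gₙ` be the Gram–Schmidt vectors of `e₁, …, eₙ`. Each `eₖ` is `gₖ` plus a combination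
of earlier `gⱼ`, so the Gram matrix is `Mᴴ diag(‖gₖ‖²) M` with `M` unitriangular and the Gram
determinant is `∏ ‖gₖ‖²`, where `‖g₁‖ = 1`. For `k ≥ 1` write `eₖ₊₁ = gₖ₊₁ + p` with
`gₖ₊₁ ⟂ K = span {e₁, …, eₖ}` and `p ∈ K`; then `‖gₖ₊₁‖² = 1 - ‖p‖²`, and since `eₖ` is a unit
vector of `K`, `‖p‖² ≥ ⟪eₖ, p⟫² = ρₖ²` with equality iff `p` is a multiple of `eₖ`. Comparing the
positive factors `1 - ρₖ²` one by one gives both the inequality and the equality case.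
-/

open Finset RealInnerProductSpace Submodule InnerProductSpace

section GramSchmidt

variable (𝕜 : Type*) {E ι : Type*} [RCLike 𝕜] [NormedAddCommGroup E] [InnerProductSpace 𝕜 E]
  [LinearOrder ι] [LocallyFiniteOrderBot ι] [WellFoundedLT ι]

theorem gramSchmidt_mem_orthogonal_span_Iio (f : ι → E) (k : ι) :
    gramSchmidt 𝕜 f k ∈ (span 𝕜 (f '' Set.Iio k))ᗮ := by
  rw [← span_gramSchmidt_Iio 𝕜 f k]
  refine (isOrtho_span.mpr ?_).le (mem_span_singleton_self _)
  rintro _ rfl _ ⟨j, hj, rfl⟩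
  exact gramSchmidt_orthogonal 𝕜 f (ne_of_gt hj)

theorem sub_gramSchmidt_mem_span_Iio (f : ι → E) (k : ι) :
    f k - gramSchmidt 𝕜 f k ∈ span 𝕜 (f '' Set.Iio k) := by
  rw [← span_gramSchmidt_Iio 𝕜 f k, sub_eq_iff_eq_add'.mpr (gramSchmidt_def'' 𝕜 f k)]
  exact sum_mem fun j hj => smul_mem _ _ (subset_span (Set.mem_image_of_mem _ (mem_Iio.mp hj)))

open Matrix in
theorem det_gram_eq_prod_norm_gramSchmidt_sq [Fintype ι] (f : ι → E) :
    (gram 𝕜 f).det = ∏ i, (‖gramSchmidt 𝕜 f i‖ : 𝕜) ^ 2 := by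
  set g := gramSchmidt 𝕜 f
  -- `M j i` is the coefficient of `g j` in `f i`.
  let M : Matrix ι ι 𝕜 := of fun j i => if j = i then 1 else ⟪g j, f i⟫_𝕜 / (‖g j‖ : 𝕜) ^ 2
  have hM : M.IsUpperTriangular := fun j i (hij : i < j) => by
    simp only [M, of_apply, if_neg hij.ne', g, gramSchmidt_inv_triangular 𝕜 f hij, zero_div]
  have hf (i : ι) : f i = ∑ j, M j i • g j := by
    have hsupp : ∀ j ∉ Iic i, M j i • g j = 0 := fun j hj => by
      have hij : i < j := not_le.mp (mt mem_Iic.mpr hj)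
      simp only [M, of_apply, if_neg hij.ne', g, gramSchmidt_inv_triangular 𝕜 f hij, zero_div,
        zero_smul]
    rw [← sum_subset (subset_univ _) fun j _ hj => hsupp j hj, ← Iio_insert,
      sum_insert notMem_Iio_self]
    simp only [M, of_apply, if_true, one_smul]
    convert gramSchmidt_def'' 𝕜 f i using 3 with j hj
    rw [if_neg (mem_Iio.mp hj).ne]
  have hgram : gram 𝕜 f = Mᴴ * diagonal (fun j => (‖g j‖ : 𝕜) ^ 2) * M := by
    ext i k
    calc gram 𝕜 f i k = ⟪∑ j, M j i • g j, ∑ l, M l k • g l⟫_𝕜 := by rw [gram_apply, ← hf, ← hf]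
      _ = ∑ j, star (M j i) * (‖g j‖ : 𝕜) ^ 2 * M j k := by
        simp only [sum_inner, inner_sum, inner_smul_left, inner_smul_right]
        refine sum_congr rfl fun j _ => ?_
        rw [sum_eq_single j (fun l _ hlj => by rw [gramSchmidt_orthogonal 𝕜 f hlj, mul_zero])
          (by simp), inner_self_eq_norm_sq_to_K, starRingEnd_apply]
        ring
      _ = _ := by rw [mul_apply]; simp only [mul_diagonal, conjTranspose_apply]
  rw [hgram, det_mul, det_mul, det_conjTranspose, det_diagonal, det_of_isUpperTriangular hM]
  simp [M]

theorem gramSchmidt_restrict_fin (f : ℕ → E) {n : ℕ} (i : Fin n) :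
    gramSchmidt 𝕜 (fun j : Fin n => f j) i = gramSchmidt 𝕜 f i := by
  induction i using WellFoundedLT.induction with
  | _ i ih =>
    rw [gramSchmidt_def, gramSchmidt_def, ← Fin.map_valEmbedding_Iio, sum_map]
    exact congrArg _ (sum_congr rfl fun j hj => by rw [ih j (mem_Iio.mp hj)]; rfl)

end GramSchmidt

theorem det_gram_fin_eq_prod_Ico_norm_gramSchmidt_sq {E : Type*} [NormedAddCommGroup E]
    [InnerProductSpace ℝ E] (f : ℕ → E) (n : ℕ) (hf : ‖f 0‖ = 1) :
    (Matrix.gram ℝ fun i : Fin n => f i).det = ∏ i ∈ Ico 1 n, ‖gramSchmidt ℝ f i‖ ^ 2 := by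
  rw [det_gram_eq_prod_norm_gramSchmidt_sq]
  simp only [gramSchmidt_restrict_fin, RCLike.ofReal_real_eq_id, id]
  rw [Fin.prod_univ_eq_prod_range fun i => ‖gramSchmidt ℝ f i‖ ^ 2]
  rcases n with _ | n
  · rfl
  rw [range_eq_Ico, prod_eq_prod_Ico_succ_bot n.succ_pos, zero_add,
    show gramSchmidt ℝ f 0 = f 0 from gramSchmidt_bot ℝ f, hf, one_pow, one_mul]

theorem Set.image_Icc_one_eq_image_Iio {α : Type*} (e : ℕ → α) (k : ℕ) :
    e '' Set.Icc 1 k = (fun j => e (j + 1)) '' Set.Iio k := by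
  ext x
  constructor
  · rintro ⟨j, ⟨hj1, hjk⟩, rfl⟩
    exact ⟨j - 1, by simp only [Set.mem_Iio]; omega, by simp only [Nat.sub_add_cancel hj1]⟩
  · rintro ⟨j, hj, rfl⟩
    exact ⟨j + 1, ⟨by omega, Set.mem_Iio.mp hj⟩, rfl⟩

theorem Finset.prod_eq_prod_iff_of_le_of_nonneg {ι R : Type*} [CommSemiring R] [PartialOrder R]
    [IsStrictOrderedRing R] {s : Finset ι} {f g : ι → R} (hf : ∀ i ∈ s, 0 ≤ f i)
    (hg : ∀ i ∈ s, 0 < g i) (hfg : ∀ i ∈ s, f i ≤ g i) :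
    ∏ i ∈ s, f i = ∏ i ∈ s, g i ↔ ∀ i ∈ s, f i = g i := by
  classical
  refine ⟨fun h => ?_, prod_congr rfl⟩
  by_contra! ⟨i, hi, hne⟩
  have hrest : ∏ j ∈ s.erase i, f j ≤ ∏ j ∈ s.erase i, g j :=
    prod_le_prod (fun j hj => hf j (mem_of_mem_erase hj)) fun j hj => hfg j (mem_of_mem_erase hj)
  have hpos : 0 < ∏ j ∈ s.erase i, g j := prod_pos fun j hj => hg j (mem_of_mem_erase hj)
  rw [← mul_prod_erase s f hi, ← mul_prod_erase s g hi] at h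
  refine h.not_lt ?_
  calc f i * ∏ j ∈ s.erase i, f j ≤ f i * ∏ j ∈ s.erase i, g j :=
        mul_le_mul_of_nonneg_left hrest (hf i hi)
    _ < g i * ∏ j ∈ s.erase i, g j := mul_lt_mul_of_pos_right ((hfg i hi).lt_of_ne hne) hpos

section Orthogonal

variable {E : Type*} [NormedAddCommGroup E] [InnerProductSpace ℝ E]

theorem norm_sub_inner_smul_sq {u : E} (hu : ‖u‖ = 1) (p : E) :
    ‖p - ⟪u, p⟫ • u‖ ^ 2 = ‖p‖ ^ 2 - ⟪u, p⟫ ^ 2 := by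
  rw [norm_sub_sq_real, real_inner_smul_right, real_inner_comm, norm_smul, hu, Real.norm_eq_abs,
    mul_one, sq_abs]
  ring

variable {K : Submodule ℝ E} {x g u : E}

theorem norm_sq_sub_inner_sq_sub_norm_sq (hg : g ∈ Kᗮ) (hxg : x - g ∈ K) (hu : u ∈ K)
    (hu1 : ‖u‖ = 1) :
    ‖x‖ ^ 2 - ⟪u, x⟫ ^ 2 - ‖g‖ ^ 2 = ‖x - g - ⟪u, x⟫ • u‖ ^ 2 := by
  have hux : ⟪u, x⟫ = ⟪u, x - g⟫ := by
    rw [inner_sub_right, K.inner_right_of_mem_orthogonal hu hg, sub_zero]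
  have hx : ‖x‖ ^ 2 = ‖g‖ ^ 2 + ‖x - g‖ ^ 2 := by
    have h := norm_add_sq_real g (x - g)
    rwa [add_sub_cancel, K.inner_left_of_mem_orthogonal hxg hg, mul_zero, add_zero] at h
  rw [hux, norm_sub_inner_smul_sq hu1, hx]
  ring

theorem norm_sq_le_of_mem_orthogonal (hg : g ∈ Kᗮ) (hxg : x - g ∈ K) (hu : u ∈ K)
    (hu1 : ‖u‖ = 1) : ‖g‖ ^ 2 ≤ ‖x‖ ^ 2 - ⟪u, x⟫ ^ 2 := by
  linarith [norm_sq_sub_inner_sq_sub_norm_sq hg hxg hu hu1, sq_nonneg ‖x - g - ⟪u, x⟫ • u‖]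

theorem norm_sq_eq_iff_exists_sub_smul_mem_orthogonal (hg : g ∈ Kᗮ) (hxg : x - g ∈ K)
    (hu : u ∈ K) (hu1 : ‖u‖ = 1) :
    ‖g‖ ^ 2 = ‖x‖ ^ 2 - ⟪u, x⟫ ^ 2 ↔ ∃ a : ℝ, x - a • u ∈ Kᗮ := by
  rw [eq_comm, ← sub_eq_zero, norm_sq_sub_inner_sq_sub_norm_sq hg hxg hu hu1, sq_eq_zero_iff,
    norm_eq_zero, sub_eq_zero]
  constructor
  · intro h
    exact ⟨⟪u, x⟫, by rwa [← h, sub_sub_cancel]⟩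
  · rintro ⟨a, ha⟩
    have hxa : x - g = a • u := by
      rw [← sub_eq_zero]
      refine disjoint_def.mp K.orthogonal_disjoint _ (sub_mem hxg (smul_mem _ a hu)) ?_
      convert sub_mem ha hg using 1
      abel
    have hux : ⟪u, x⟫ = a := by
      rw [← sub_add_cancel x g, inner_add_right, hxa, K.inner_right_of_mem_orthogonal hu hg,
        real_inner_smul_right, real_inner_self_eq_norm_sq, hu1]
      ring
    rw [hxa, hux]

end Orthogonal

/-- For unit vectors `e_1,…,e_n` in a real inner product space with consecutive inner products
`ρ_i = ⟪e_i, e_{i+1}⟫`, `|ρ_i| < 1`, the Gram determinant is at most `∏ (1-ρ_i²)`, with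
equality iff each projection of `e_{k+1}` onto `span{e_1,…,e_k}` is parallel to `e_k`
(expressed here as: `e_{k+1} - a • e_k` is orthogonal to `span{e_1,…,e_k}` for some `a`). -/
theorem stmt16 {E : Type*} [NormedAddCommGroup E] [InnerProductSpace ℝ E]
    (n : ℕ) (e : ℕ → E) (ρ : ℕ → ℝ)
    (hunit : ∀ i, 1 ≤ i → i ≤ n → ‖e i‖ = 1)
    (hρ : ∀ i, 1 ≤ i → i + 1 ≤ n → ⟪e i, e (i + 1)⟫ = ρ i)
    (hsmall : ∀ i, 1 ≤ i → i + 1 ≤ n → |ρ i| < 1) :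
    (Matrix.of fun i j : Fin n => ⟪e ((i : ℕ) + 1), e ((j : ℕ) + 1)⟫).det ≤
      ∏ i ∈ Finset.Ico 1 n, (1 - ρ i ^ 2) ∧
    ((Matrix.of fun i j : Fin n => ⟪e ((i : ℕ) + 1), e ((j : ℕ) + 1)⟫).det =
        ∏ i ∈ Finset.Ico 1 n, (1 - ρ i ^ 2) ↔
      ∀ k, 1 ≤ k → k ≤ n - 1 → ∃ a : ℝ,
        ∀ v ∈ Submodule.span ℝ (e '' Set.Icc 1 k), ⟪e (k + 1) - a • e k, v⟫ = 0) := by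
  rcases Nat.eq_zero_or_pos n with rfl | hn
  · simp +contextual
  have hfactor : ∀ i ∈ Ico 1 n,
      ‖gramSchmidt ℝ (fun j => e (j + 1)) i‖ ^ 2 ≤ 1 - ρ i ^ 2 ∧
      (‖gramSchmidt ℝ (fun j => e (j + 1)) i‖ ^ 2 = 1 - ρ i ^ 2 ↔
        ∃ a : ℝ, e (i + 1) - a • e i ∈ (span ℝ (e '' Set.Icc 1 i))ᗮ) := by
    intro i hi
    obtain ⟨hi1, hin⟩ := mem_Ico.mp hi
    have hgK := gramSchmidt_mem_orthogonal_span_Iio ℝ (fun j => e (j + 1)) i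
    have hxg := sub_gramSchmidt_mem_span_Iio ℝ (fun j => e (j + 1)) i
    rw [← Set.image_Icc_one_eq_image_Iio] at hgK hxg
    have hu : e i ∈ span ℝ (e '' Set.Icc 1 i) := subset_span ⟨i, ⟨hi1, le_rfl⟩, rfl⟩
    have hu1 := hunit i hi1 hin.le
    have hx : ‖e (i + 1)‖ ^ 2 - ⟪e i, e (i + 1)⟫ ^ 2 = 1 - ρ i ^ 2 := by
      rw [hunit (i + 1) (by omega) hin, hρ i hi1 hin, one_pow]
    rw [← hx]
    exact ⟨norm_sq_le_of_mem_orthogonal hgK hxg hu hu1,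
      norm_sq_eq_iff_exists_sub_smul_mem_orthogonal hgK hxg hu hu1⟩
  have hpos : ∀ i ∈ Ico 1 n, 0 < 1 - ρ i ^ 2 := fun i hi =>
    sub_pos.mpr ((sq_lt_one_iff_abs_lt_one _).mpr (hsmall i (mem_Ico.mp hi).1 (mem_Ico.mp hi).2))
  rw [show Matrix.of _ = Matrix.gram ℝ fun i : Fin n => e (i + 1) from rfl,
    det_gram_fin_eq_prod_Ico_norm_gramSchmidt_sq (fun j => e (j + 1)) n (hunit 1 le_rfl hn),
    prod_eq_prod_iff_of_le_of_nonneg (fun i _ => sq_nonneg _) hpos fun i hi => (hfactor i hi).1]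
  refine ⟨prod_le_prod (fun i _ => sq_nonneg _) fun i hi => (hfactor i hi).1, ?_⟩
  simp_rw [← mem_orthogonal']
  exact ⟨fun h k hk1 hkn => (hfactor k (mem_Ico.mpr ⟨hk1, by omega⟩)).2.mp
      (h k (mem_Ico.mpr ⟨hk1, by omega⟩)),
    fun h i hi => (hfactor i hi).2.mpr (h i (mem_Ico.mp hi).1 (by grind))⟩
end

section
/- Let ρ_1, ..., ρ_{n-1} be reals with |ρ_i| < 1. Then there exist unit vectors e_1, ..., e_n in ℝ^n that are linearly independent, satisfy ⟨e_i, e_{i+1}⟩ = ρ_i, and satisfy the Markov product property ⟨e_k, e_l⟩ = ∏_{j=k}^{l-1} ρ_j for all k < l. -/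
open Finset RealInnerProductSpace

/-!
Take an orthonormal basis `b₀, …, b_{n-1}` and build the vectors like an AR(1) process:
`e₀ = b₀` and `e_{k+1} = ρ_k e_k + √(1 - ρ_k²) b_{k+1}`. Since `e_k` lies in the span of
`b₀, …, b_k`, it is orthogonal to `b_{k+1}`; hence `‖e_{k+1}‖² = ρ_k² + (1 - ρ_k²) = 1` and
`⟪e_k, e_{l+1}⟫ = ρ_l ⟪e_k, e_l⟫`, which gives the product formula. When every `|ρ_k| < 1`
each `b_k` is recovered from `e_k` and `e_{k-1}`, so the `e_k` span the space and are
linearly independent.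
-/

variable {E : Type*} [NormedAddCommGroup E] [InnerProductSpace ℝ E]

noncomputable def markovSeq (ρ : ℕ → ℝ) (b : ℕ → E) : ℕ → E
  | 0 => b 0
  | k + 1 => ρ k • markovSeq ρ b k + √(1 - ρ k ^ 2) • b (k + 1)

lemma sq_add_sq_sqrt_one_sub_sq {r : ℝ} (hr : |r| ≤ 1) : r ^ 2 + √(1 - r ^ 2) ^ 2 = 1 := by
  rw [Real.sq_sqrt (by linarith [(sq_le_one_iff_abs_le_one r).mpr hr])]
  ring

lemma sqrt_one_sub_sq_ne_zero {r : ℝ} (hr : |r| < 1) : √(1 - r ^ 2) ≠ 0 :=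
  Real.sqrt_ne_zero'.mpr (by linarith [(sq_lt_one_iff_abs_lt_one r).mpr hr])

namespace markovSeq

variable {ρ : ℕ → ℝ} {b : ℕ → E} {n : ℕ}

lemma inner_eq_zero (hb : Orthonormal ℝ fun i : Fin n => b i) {k j : ℕ} (hkj : k < j)
    (hj : j < n) : ⟪markovSeq ρ b k, b j⟫ = 0 := by
  have hb' : ∀ i < j, ⟪b i, b j⟫ = 0 := fun i hi =>
    hb.inner_eq_zero (i := ⟨i, by omega⟩) (j := ⟨j, hj⟩) (Fin.ne_of_val_ne hi.ne)
  induction k with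
  | zero => exact hb' 0 hkj
  | succ k ih =>
    rw [markovSeq, inner_add_left, real_inner_smul_left, real_inner_smul_left, ih (by omega),
      hb' _ hkj, mul_zero, mul_zero, add_zero]

lemma norm_eq_one (hb : Orthonormal ℝ fun i : Fin n => b i) (hρ : ∀ i, i + 1 < n → |ρ i| ≤ 1)
    {k : ℕ} (hk : k < n) : ‖markovSeq ρ b k‖ = 1 := by
  induction k with
  | zero => exact hb.1 ⟨0, hk⟩
  | succ k ih =>
    have horth : ⟪ρ k • markovSeq ρ b k, √(1 - ρ k ^ 2) • b (k + 1)⟫ = 0 := by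
      rw [real_inner_smul_left, real_inner_smul_right, inner_eq_zero hb (Nat.lt_succ_self k) hk,
        mul_zero, mul_zero]
    have hsq := norm_add_sq_eq_norm_sq_add_norm_sq_real horth
    rw [norm_smul, norm_smul, ih (by omega), hb.1 ⟨k + 1, hk⟩, Real.norm_eq_abs,
      Real.norm_of_nonneg (Real.sqrt_nonneg _), mul_one, mul_one, abs_mul_abs_self, ← sq, ← sq,
      ← sq, sq_add_sq_sqrt_one_sub_sq (hρ k hk)] at hsq
    rw [markovSeq]
    exact (pow_eq_one_iff_of_nonneg (norm_nonneg _) two_ne_zero).mp hsq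

lemma inner_eq_prod (hb : Orthonormal ℝ fun i : Fin n => b i) (hρ : ∀ i, i + 1 < n → |ρ i| ≤ 1)
    {k l : ℕ} (hkl : k ≤ l) (hl : l < n) :
    ⟪markovSeq ρ b k, markovSeq ρ b l⟫ = ∏ j ∈ Ico k l, ρ j := by
  induction l, hkl using Nat.le_induction with
  | base => rw [real_inner_self_eq_norm_sq, norm_eq_one hb hρ hl, Ico_self, prod_empty, one_pow]
  | succ l hkl ih =>
    rw [markovSeq, inner_add_right, real_inner_smul_right, real_inner_smul_right, ih (by omega),
      inner_eq_zero hb (by omega) hl, prod_Ico_succ_top hkl]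
    ring

lemma mem_span (hρ : ∀ i, i + 1 < n → |ρ i| < 1) {k : ℕ} (hk : k < n) :
    b k ∈ Submodule.span ℝ (Set.range fun i : Fin n => markovSeq ρ b i) := by
  have hmem : ∀ i < n,
      markovSeq ρ b i ∈ Submodule.span ℝ (Set.range fun i : Fin n => markovSeq ρ b i) :=
    fun i hi => Submodule.subset_span ⟨⟨i, hi⟩, rfl⟩
  cases k with
  | zero => exact hmem 0 hk
  | succ k =>
    have hb : b (k + 1) =
        (√(1 - ρ k ^ 2))⁻¹ • (markovSeq ρ b (k + 1) - ρ k • markovSeq ρ b k) := by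
      rw [markovSeq, add_sub_cancel_left, inv_smul_smul₀ (sqrt_one_sub_sq_ne_zero (hρ k hk))]
    rw [hb]
    exact Submodule.smul_mem _ _
      (Submodule.sub_mem _ (hmem _ hk) (Submodule.smul_mem _ _ (hmem k (by omega))))

lemma linearIndependent [FiniteDimensional ℝ E] (hn : Module.finrank ℝ E = n)
    (hb : Orthonormal ℝ fun i : Fin n => b i) (hρ : ∀ i, i + 1 < n → |ρ i| < 1) :
    LinearIndependent ℝ fun i : Fin n => markovSeq ρ b i := by
  rcases isEmpty_or_nonempty (Fin n) with _ | _
  · exact linearIndependent_empty_type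
  have hcard : Fintype.card (Fin n) = Module.finrank ℝ E := by rw [Fintype.card_fin, hn]
  refine linearIndependent_of_top_le_span_of_card_eq_finrank ?_ hcard
  rw [← hb.linearIndependent.span_eq_top_of_card_eq_finrank hcard, Submodule.span_le]
  rintro _ ⟨i, rfl⟩
  exact mem_span hρ i.2

end markovSeq

/-- Given `ρ_1,…,ρ_{n-1}` with `|ρ_i| < 1` (0-based: `ρ 0,…,ρ (n-2)`), there exist linearly
independent unit vectors `e_0,…,e_{n-1}` in `ℝ^n` with `⟪e_i, e_{i+1}⟫ = ρ_i` and the Markov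
product property `⟪e_k, e_l⟫ = ρ_k ⋯ ρ_{l-1}` for `k < l`. -/
theorem stmt18 (n : ℕ) (ρ : ℕ → ℝ) (hρ : ∀ i, i + 1 < n → |ρ i| < 1) :
    ∃ e : Fin n → EuclideanSpace ℝ (Fin n),
      LinearIndependent ℝ e ∧
      (∀ i : Fin n, ‖e i‖ = 1) ∧
      (∀ (i : Fin n) (h : (i : ℕ) + 1 < n), ⟪e i, e ⟨(i : ℕ) + 1, h⟩⟫ = ρ (i : ℕ)) ∧
      (∀ k l : Fin n, (k : ℕ) < (l : ℕ) →
        ⟪e k, e l⟫ = ∏ j ∈ Finset.Ico (k : ℕ) (l : ℕ), ρ j) := by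
  set b : ℕ → EuclideanSpace ℝ (Fin n) :=
    fun j => if h : j < n then EuclideanSpace.single ⟨j, h⟩ 1 else 0
  have hb : Orthonormal ℝ fun i : Fin n => b i := by
    simpa [b] using EuclideanSpace.orthonormal_single (ι := Fin n) (𝕜 := ℝ)
  have hρ' : ∀ i, i + 1 < n → |ρ i| ≤ 1 := fun i hi => (hρ i hi).le
  refine ⟨fun i => markovSeq ρ b i, markovSeq.linearIndependent finrank_euclideanSpace_fin hb hρ,
    fun i => markovSeq.norm_eq_one hb hρ' i.2, fun i h => ?_,
    fun k l hkl => markovSeq.inner_eq_prod hb hρ' hkl.le l.2⟩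
  rw [markovSeq.inner_eq_prod hb hρ' (Nat.le_succ _) h, Nat.Ico_succ_singleton, prod_singleton]
end
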